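/- arXiv:1710.01638 — 6 statements merged into one kernel-verified Lean document; each statement's English description precedes it below -/
import Mathlib

section
/- Let $X$ be a Banach space with a dense sequence $(x_i)_{i=1}^\infty$ in its unit sphere, and let $E$ be the space of real sequences $a=(a_i)$ with $\|a\|_E = \sup_{0=p_0<p_1<\cdots<p_k} \big(\sum_{j=1}^k \|\sum_{i=p_{j-1}+1}^{p_j} a_i x_i\|_X^2\big)^{1/2} < \infty$. If $a, b \in E$, $a$ is supported in $[1,k]$ and $b$ is supported in $[k+3,\infty)$, then $\|a+b\|_E^2 \geq \|a\|_E^2 + \|b\|_E^2$. -/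
/-- The set of values whose supremum defines the norm of the Lindenstrauss space `E`:
for a finite strictly increasing sequence `0 = p 0 < p 1 < ⋯ < p k`, the value
`(∑_{j=1}^k ‖∑_{i=p_{j-1}+1}^{p_j} a i • x i‖²)^{1/2}`. -/
noncomputable def ENormSet {X : Type*} [NormedAddCommGroup X] [NormedSpace ℝ X]
    (x : ℕ → X) (a : ℕ → ℝ) : Set ℝ :=
  { r | ∃ (k : ℕ) (p : ℕ → ℕ), p 0 = 0 ∧ StrictMono p ∧
      r = Real.sqrt (∑ j ∈ Finset.range k,
        ‖∑ i ∈ Finset.Ioc (p j) (p (j + 1)), a i • x i‖ ^ 2) }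

/-- The norm `‖a‖_E = sup_{0 = p₀ < p₁ < ⋯ < p_k} (∑_j ‖∑_{i=p_{j-1}+1}^{p_j} a_i x_i‖²)^{1/2}`. -/
noncomputable def LindENorm {X : Type*} [NormedAddCommGroup X] [NormedSpace ℝ X]
    (x : ℕ → X) (a : ℕ → ℝ) : ℝ :=
  sSup (ENormSet x a)

/-!
Given admissible partitions for `a` and for `b`, cut the first at `k` and start the second at
`k`: since `a` lives on `[1, k]` and `b` beyond `k`, neither operation changes a nonzero block,
and the two pieces glue to an admissible partition for `a + b` whose blocks are those of `a`
followed by those of `b`. Hence a sum of squared block norms for `a` plus one for `b` is at most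
one for `a + b`, and taking suprema gives the inequality.
-/

open Finset Function

section IocClamp

variable {M : Type*} [AddCommMonoid M] (f : ℕ → M) (u v K : ℕ)

theorem sum_Ioc_min_eq_sum_filter :
    ∑ i ∈ Ioc (min u K) (min v K), f i = ∑ i ∈ (Ioc u v).filter (· ≤ K), f i := by
  congr 1; ext i; simp only [mem_Ioc, mem_filter]; omega

theorem sum_Ioc_max_eq_sum_filter :
    ∑ i ∈ Ioc (max u K) (max v K), f i = ∑ i ∈ (Ioc u v).filter (K < ·), f i := by
  congr 1; ext i; simp only [mem_Ioc, mem_filter]; omega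

end IocClamp

section RangeSums

variable {M : Type*} [AddCommMonoid M] [PartialOrder M] [IsOrderedAddMonoid M] {f : ℕ → M}

theorem sum_range_le_sum_range_of_eq_zero (hf : ∀ j, 0 ≤ f j) {m' : ℕ}
    (h : ∀ j, m' ≤ j → f j = 0) (m : ℕ) :
    ∑ j ∈ range m, f j ≤ ∑ j ∈ range m', f j :=
  calc ∑ j ∈ range m, f j ≤ ∑ j ∈ range (m' + m), f j :=
        sum_le_sum_of_subset_of_nonneg (range_subset_range.2 (by omega)) fun j _ _ => hf j
    _ = ∑ j ∈ range m', f j := by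
        rw [sum_range_add,
          sum_eq_zero fun i (_ : i ∈ range m) => h (m' + i) (Nat.le_add_right _ _), add_zero]

theorem sum_range_le_sum_range_shift (hf : ∀ j, 0 ≤ f j) {n₀ : ℕ}
    (h : ∀ j < n₀, f j = 0) (n : ℕ) :
    ∑ j ∈ range n, f j ≤ ∑ i ∈ range n, f (n₀ + i) :=
  calc ∑ j ∈ range n, f j ≤ ∑ j ∈ range (n₀ + n), f j :=
        sum_le_sum_of_subset_of_nonneg (range_subset_range.2 (by omega)) fun j _ _ => hf j
    _ = ∑ i ∈ range n, f (n₀ + i) := by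
        rw [sum_range_add, sum_eq_zero fun j hj => h j (mem_range.1 hj), zero_add]

end RangeSums

theorem StrictMono.exists_forall_lt_and_le {p : ℕ → ℕ} (hp : StrictMono p) (L : ℕ) :
    ∃ m, (∀ j < m, p j < L) ∧ L ≤ p m :=
  have h : ∃ m, L ≤ p m := ⟨L, hp.id_le L⟩
  ⟨Nat.find h, fun _ hj => not_le.1 (Nat.find_min h hj), Nat.find_spec h⟩

theorem sq_csSup_le {S : Set ℝ} {C : ℝ} (hS : S.Nonempty) (hS₀ : ∀ s ∈ S, 0 ≤ s)
    (h : ∀ s ∈ S, s ^ 2 ≤ C) : sSup S ^ 2 ≤ C := by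
  obtain ⟨s, hs⟩ := hS
  have hC : 0 ≤ C := (sq_nonneg s).trans (h s hs)
  rw [← Real.le_sqrt (Real.sSup_nonneg hS₀) hC]
  exact csSup_le ⟨s, hs⟩ fun t ht => (Real.le_sqrt (hS₀ t ht) hC).2 (h t ht)

theorem sq_csSup_add_sq_csSup_le {S T : Set ℝ} {C : ℝ} (hS : S.Nonempty) (hT : T.Nonempty)
    (hS₀ : ∀ s ∈ S, 0 ≤ s) (hT₀ : ∀ t ∈ T, 0 ≤ t)
    (h : ∀ s ∈ S, ∀ t ∈ T, s ^ 2 + t ^ 2 ≤ C) :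
    sSup S ^ 2 + sSup T ^ 2 ≤ C := by
  have hST : ∀ t ∈ T, sSup S ^ 2 ≤ C - t ^ 2 := fun t ht =>
    sq_csSup_le hS hS₀ fun s hs => by linarith [h s hs t ht]
  have := sq_csSup_le (C := C - sSup S ^ 2) hT hT₀ fun t ht => by linarith [hST t ht]
  linarith

section Blocks

variable {X : Type*} [NormedAddCommGroup X] [NormedSpace ℝ X]

def blockSum (x : ℕ → X) (c : ℕ → ℝ) (p : ℕ → ℕ) (j : ℕ) : X :=
  ∑ i ∈ Ioc (p j) (p (j + 1)), c i • x i

def blockEnergy (x : ℕ → X) (c : ℕ → ℝ) (m : ℕ) (p : ℕ → ℕ) : ℝ :=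
  ∑ j ∈ range m, ‖blockSum x c p j‖ ^ 2

variable {x : ℕ → X} {a b c : ℕ → ℝ} {p q r : ℕ → ℕ} {K : ℕ}

theorem blockSum_add (j : ℕ) : blockSum x (a + b) p j = blockSum x a p j + blockSum x b p j := by
  simp only [blockSum, Pi.add_apply, add_smul, sum_add_distrib]

theorem blockSum_eq_zero {j : ℕ} (h : ∀ i ∈ Ioc (p j) (p (j + 1)), c i = 0) :
    blockSum x c p j = 0 :=
  sum_eq_zero fun i hi => by rw [h i hi, zero_smul]

theorem blockSum_add_eq_left (ha : support a ⊆ Set.Iic K) (hb : support b ⊆ Set.Ioi K) {j : ℕ}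
    (h₀ : r j = min (p j) K) (h₁ : r (j + 1) = min (p (j + 1)) K) :
    blockSum x (a + b) r j = blockSum x a p j := by
  rw [blockSum, h₀, h₁, sum_Ioc_min_eq_sum_filter, sum_filter]
  refine sum_congr rfl fun i _ => ?_
  split_ifs with hi
  · rw [Pi.add_apply, notMem_support.1 fun h => not_lt.2 hi (hb h), add_zero]
  · rw [notMem_support.1 fun h => hi (ha h), zero_smul]

theorem blockSum_add_eq_right (ha : support a ⊆ Set.Iic K) (hb : support b ⊆ Set.Ioi K)
    {j j' : ℕ} (h₀ : r j = max (q j') K) (h₁ : r (j + 1) = max (q (j' + 1)) K) :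
    blockSum x (a + b) r j = blockSum x b q j' := by
  rw [blockSum, h₀, h₁, sum_Ioc_max_eq_sum_filter, sum_filter]
  refine sum_congr rfl fun i _ => ?_
  split_ifs with hi
  · rw [Pi.add_apply, notMem_support.1 fun h => not_le.2 hi (ha h), zero_add]
  · rw [notMem_support.1 fun h => hi (hb h), zero_smul]

theorem blockEnergy_nonneg (m : ℕ) : 0 ≤ blockEnergy x c m p :=
  sum_nonneg fun _ _ => sq_nonneg _

def clampGlue (p q : ℕ → ℕ) (K m n₀ : ℕ) (j : ℕ) : ℕ :=
  if j ≤ m then min (p j) K else max (q (n₀ + (j - m))) K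

theorem clampGlue_of_le {m n₀ j : ℕ} (hj : j ≤ m) : clampGlue p q K m n₀ j = min (p j) K :=
  if_pos hj

theorem clampGlue_add {m n₀ : ℕ} (hpm : K ≤ p m) (hqn : q n₀ ≤ K) (i : ℕ) :
    clampGlue p q K m n₀ (m + i) = max (q (n₀ + i)) K := by
  unfold clampGlue
  split_ifs with hi
  · obtain rfl : i = 0 := by omega
    simp only [Nat.add_zero]
    omega
  · rw [Nat.add_sub_cancel_left]

theorem strictMono_clampGlue (hp : StrictMono p) (hq : StrictMono q) {m n₀ : ℕ}
    (hp_lt : ∀ j < m, p j < K) (hpm : K ≤ p m) (hqn : q n₀ ≤ K) (hqn' : K < q (n₀ + 1)) :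
    StrictMono (clampGlue p q K m n₀) := by
  refine strictMono_nat_of_lt_succ fun j => ?_
  rcases lt_or_ge j m with hj | hj
  · have := hp (lt_add_one j)
    have := hp_lt j hj
    rw [clampGlue_of_le hj.le, clampGlue_of_le (show j + 1 ≤ m from hj)]
    omega
  · obtain ⟨i, rfl⟩ := Nat.exists_eq_add_of_le hj
    have := hq (lt_add_one (n₀ + i))
    have := hq.monotone (show n₀ + 1 ≤ n₀ + i + 1 by omega)
    rw [clampGlue_add hpm hqn, add_assoc, clampGlue_add hpm hqn, ← add_assoc]
    omega

theorem exists_blockEnergy_add_le (ha : support a ⊆ Set.Iic K) (hb : support b ⊆ Set.Ioi K)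
    (hp0 : p 0 = 0) (hp : StrictMono p) (hq0 : q 0 = 0) (hq : StrictMono q) (m n : ℕ) :
    ∃ l r, r 0 = 0 ∧ StrictMono r ∧
      blockEnergy x a m p + blockEnergy x b n q ≤ blockEnergy x (a + b) l r := by
  obtain ⟨m', hp_lt, hpm⟩ := hp.exists_forall_lt_and_le K
  obtain ⟨n', hq_le, hqn'⟩ := hq.exists_forall_lt_and_le (K + 1)
  obtain ⟨n₀, rfl⟩ := Nat.exists_eq_add_one_of_ne_zero (n := n') (by rintro rfl; omega)
  have hqn : q n₀ ≤ K := Nat.lt_succ_iff.1 (hq_le n₀ (lt_add_one n₀))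
  have hzero_a : ∀ j, m' ≤ j → ‖blockSum x a p j‖ ^ 2 = 0 := fun j hj => by
    rw [blockSum_eq_zero fun i hi => notMem_support.1 fun h =>
      (hpm.trans (hp.monotone hj)).not_gt ((mem_Ioc.1 hi).1.trans_le (ha h)), norm_zero,
      zero_pow two_ne_zero]
  have hzero_b : ∀ j < n₀, ‖blockSum x b q j‖ ^ 2 = 0 := fun j hj => by
    rw [blockSum_eq_zero fun i hi => notMem_support.1 fun h =>
      (Nat.lt_succ_iff.1 (hq_le (j + 1) (by omega))).not_gt ((hb h).trans_le (mem_Ioc.1 hi).2),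
      norm_zero, zero_pow two_ne_zero]
  refine ⟨m' + n, clampGlue p q K m' n₀, by simp [clampGlue, hp0],
    strictMono_clampGlue hp hq hp_lt hpm hqn (by omega), ?_⟩
  calc blockEnergy x a m p + blockEnergy x b n q
      ≤ ∑ j ∈ range m', ‖blockSum x a p j‖ ^ 2 +
          ∑ i ∈ range n, ‖blockSum x b q (n₀ + i)‖ ^ 2 :=
        add_le_add (sum_range_le_sum_range_of_eq_zero (fun _ => sq_nonneg _) hzero_a m)
          (sum_range_le_sum_range_shift (fun _ => sq_nonneg _) hzero_b n)
    _ = blockEnergy x (a + b) (m' + n) (clampGlue p q K m' n₀) := by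
        rw [blockEnergy, sum_range_add]
        congr 1 <;> refine sum_congr rfl fun j hj => ?_
        · have hj := mem_range.1 hj
          rw [blockSum_add_eq_left ha hb (clampGlue_of_le hj.le)
            (clampGlue_of_le (show j + 1 ≤ m' from hj))]
        · rw [blockSum_add_eq_right ha hb (clampGlue_add hpm hqn j)
            (by rw [add_assoc, clampGlue_add hpm hqn, ← add_assoc])]

theorem zero_mem_ENormSet : (0 : ℝ) ∈ ENormSet x c :=
  ⟨0, id, rfl, strictMono_id, by simp⟩

theorem nonneg_of_mem_ENormSet {s : ℝ} (hs : s ∈ ENormSet x c) : 0 ≤ s := by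
  obtain ⟨m, p, -, -, rfl⟩ := hs
  exact Real.sqrt_nonneg _

theorem blockEnergy_le_LindENorm_sq (hc : BddAbove (ENormSet x c)) (hp0 : p 0 = 0)
    (hp : StrictMono p) (m : ℕ) : blockEnergy x c m p ≤ LindENorm x c ^ 2 :=
  (Real.sqrt_le_iff.1 (le_csSup hc ⟨m, p, hp0, hp, rfl⟩)).2

theorem bddAbove_ENormSet_add (ha : BddAbove (ENormSet x a)) (hb : BddAbove (ENormSet x b)) :
    BddAbove (ENormSet x (a + b)) := by
  refine ⟨Real.sqrt (2 * (LindENorm x a ^ 2 + LindENorm x b ^ 2)), ?_⟩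
  rintro _ ⟨m, p, hp0, hp, rfl⟩
  refine Real.sqrt_le_sqrt ?_
  calc blockEnergy x (a + b) m p ≤ 2 * (blockEnergy x a m p + blockEnergy x b m p) := by
        unfold blockEnergy
        rw [← sum_add_distrib, mul_sum]
        refine sum_le_sum fun j _ => ?_
        rw [blockSum_add]
        exact (pow_le_pow_left₀ (norm_nonneg _) (norm_add_le _ _) 2).trans add_sq_le
    _ ≤ 2 * (LindENorm x a ^ 2 + LindENorm x b ^ 2) := by
        gcongr <;> exact blockEnergy_le_LindENorm_sq ‹_› hp0 hp m

end Blocks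

theorem enorm_sq_add_le_general {X : Type*} [NormedAddCommGroup X] [NormedSpace ℝ X]
    (x : ℕ → X)
    (a b : ℕ → ℝ) (k : ℕ)
    (ha : ∀ i, a i ≠ 0 → 1 ≤ i ∧ i ≤ k)
    (hb : ∀ i, b i ≠ 0 → k + 3 ≤ i)
    (haE : BddAbove (ENormSet x a)) (hbE : BddAbove (ENormSet x b)) :
    LindENorm x a ^ 2 + LindENorm x b ^ 2 ≤ LindENorm x (a + b) ^ 2 := by
  have hsupp_a : support a ⊆ Set.Iic k := fun i hi => (ha i hi).2
  have hsupp_b : support b ⊆ Set.Ioi k := fun i hi => by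
    have := hb i hi
    exact Set.mem_Ioi.2 (by omega)
  refine sq_csSup_add_sq_csSup_le ⟨0, zero_mem_ENormSet⟩ ⟨0, zero_mem_ENormSet⟩
    (fun _ => nonneg_of_mem_ENormSet) (fun _ => nonneg_of_mem_ENormSet) ?_
  rintro _ ⟨m, p, hp0, hp, rfl⟩ _ ⟨n, q, hq0, hq, rfl⟩
  obtain ⟨l, r, hr0, hr, hle⟩ :=
    exists_blockEnergy_add_le (x := x) hsupp_a hsupp_b hp0 hp hq0 hq m n
  change √(blockEnergy x a m p) ^ 2 + √(blockEnergy x b n q) ^ 2 ≤ _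
  rw [Real.sq_sqrt (blockEnergy_nonneg m), Real.sq_sqrt (blockEnergy_nonneg n)]
  exact hle.trans (blockEnergy_le_LindENorm_sq (bddAbove_ENormSet_add haE hbE) hr0 hr l)

/-- If `a` is supported in `[1,k]` and `b` is supported in `[k+3,∞)`, then
`‖a+b‖_E² ≥ ‖a‖_E² + ‖b‖_E²`. -/
theorem enorm_sq_add_le {X : Type*} [NormedAddCommGroup X] [NormedSpace ℝ X] [CompleteSpace X]
    (x : ℕ → X) (hx : ∀ i, ‖x i‖ = 1)
    (hdense : Metric.sphere (0 : X) 1 ⊆ closure (Set.range x))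
    (a b : ℕ → ℝ) (k : ℕ)
    (ha : ∀ i, a i ≠ 0 → 1 ≤ i ∧ i ≤ k)
    (hb : ∀ i, b i ≠ 0 → k + 3 ≤ i)
    (haE : BddAbove (ENormSet x a)) (hbE : BddAbove (ENormSet x b)) :
    LindENorm x a ^ 2 + LindENorm x b ^ 2 ≤ LindENorm x (a + b) ^ 2 :=
  enorm_sq_add_le_general x a b k ha hb haE hbE
end

section
/- With $E$ as above, suppose $a^1,\ldots,a^N \in E$ are skipped blocks, i.e., there exist $0 = r_0 < r_1 < \cdots < r_N$ with $\mathrm{supp}(a^k) \subset (r_{k-1}, r_k)$ (strictly inside, leaving gaps at the endpoints) for each $k$. Let $\varepsilon_k = \|\sum_{i=1}^\infty a^k_i x_i\|_X$. Then $\|\sum_{k=1}^N a^k\|_E \leq \sum_{k=1}^N \varepsilon_k + 2\big(\sum_{k=1}^N \|a^k\|_E^2\big)^{1/2}$. -/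
open Finset

section SquareSums

variable {ι : Type*}

lemma Real.sqrt_sum_sq_add_le (s : Finset ι) (f g : ι → ℝ) :
    √(∑ i ∈ s, (f i + g i) ^ 2) ≤ √(∑ i ∈ s, f i ^ 2) + √(∑ i ∈ s, g i ^ 2) := by
  simpa [Real.sqrt_eq_rpow, sq_abs] using Real.Lp_add_le s f g one_le_two

lemma Real.sqrt_sum_sq_le_sum {s : Finset ι} {f : ι → ℝ} (hf : ∀ i ∈ s, 0 ≤ f i) :
    √(∑ i ∈ s, f i ^ 2) ≤ ∑ i ∈ s, f i :=
  (Real.sqrt_le_sqrt (sum_sq_le_sq_sum_of_nonneg hf)).trans_eq (Real.sqrt_sq (sum_nonneg hf))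

lemma norm_sum_le_sqrt_card_mul_sum_sq {E : Type*} [SeminormedAddCommGroup E]
    (s : Finset ι) (v : ι → E) :
    ‖∑ i ∈ s, v i‖ ≤ √(#s * ∑ i ∈ s, ‖v i‖ ^ 2) :=
  (norm_sum_le s v).trans <| (le_abs_self _).trans <| Real.abs_le_sqrt sq_sum_le_card_mul_sum_sq

lemma Real.sqrt_two_mul_le {t : ℝ} (ht : 0 ≤ t) : √(2 * t) ≤ 2 * √t := by
  rw [Real.sqrt_le_iff, mul_pow, Real.sq_sqrt ht]
  constructor <;> nlinarith [Real.sqrt_nonneg t]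

end SquareSums

section Supports

/-- Zero is excluded so that a sequence is supported in at most one interval of a partition. -/
def SupportedInIoc (a : ℕ → ℝ) (s t : ℕ) : Prop :=
  (∃ i, a i ≠ 0) ∧ ∀ i, a i ≠ 0 → s < i ∧ i ≤ t

def Straddles (a : ℕ → ℝ) (n : ℕ) : Prop :=
  (∃ i ≤ n, a i ≠ 0) ∧ ∃ i, n < i ∧ a i ≠ 0

def IsBlockSequence {κ : Type*} [LT κ] (a : κ → ℕ → ℝ) : Prop :=
  ∀ ⦃k l⦄, k < l → ∀ ⦃i j⦄, a k i ≠ 0 → a l j ≠ 0 → i < j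

lemma SupportedInIoc.eq_of_monotone {a : ℕ → ℝ} {p : ℕ → ℕ} (hp : Monotone p) {j j' : ℕ}
    (h : SupportedInIoc a (p j) (p (j + 1))) (h' : SupportedInIoc a (p j') (p (j' + 1))) :
    j = j' := by
  obtain ⟨⟨i, hi⟩, hsupp⟩ := h
  have hj := hsupp i hi
  have hj' := h'.2 i hi
  by_contra hne
  rcases Nat.lt_or_gt_of_ne hne with hlt | hlt
  · have := hp (show j + 1 ≤ j' by omega); omega
  · have := hp (show j' + 1 ≤ j by omega); omega

lemma straddles_or_straddles_of_not_supportedInIoc {X : Type*} [AddCommMonoid X] [Module ℝ X]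
    {x : ℕ → X} {a : ℕ → ℝ} {s t : ℕ} (hsum : ∑ i ∈ Ioc s t, a i • x i ≠ 0)
    (hnot : ¬SupportedInIoc a s t) : Straddles a s ∨ Straddles a t := by
  obtain ⟨i, hi, hai⟩ := exists_ne_zero_of_sum_ne_zero hsum
  replace hai := left_ne_zero_of_smul hai
  rw [mem_Ioc] at hi
  have hout : ∃ j, a j ≠ 0 ∧ ¬(s < j ∧ j ≤ t) := by
    by_contra! h
    exact hnot ⟨⟨i, hai⟩, h⟩
  obtain ⟨j, haj, hj⟩ := hout
  rcases le_or_gt j s with hjs | htj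
  · exact .inl ⟨⟨j, hjs, haj⟩, i, hi.1, hai⟩
  · exact .inr ⟨⟨i, hi.2, hai⟩, j, by omega, haj⟩

variable {κ : Type*} [LinearOrder κ] {a : κ → ℕ → ℝ}

lemma IsBlockSequence.subsingleton_straddles (ha : IsBlockSequence a) (n : ℕ) :
    {k | Straddles (a k) n}.Subsingleton := by
  have key : ∀ ⦃k l⦄, k < l → Straddles (a k) n → ¬Straddles (a l) n :=
    fun k l hkl ⟨_, i, hi, hai⟩ ⟨⟨j, hj, haj⟩, _⟩ => by have := ha hkl hai haj; omega
  exact fun k hk l hl => le_antisymm (not_lt.1 fun h => key h hl hk) (not_lt.1 fun h => key h hk hl)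

open scoped Classical in
lemma IsBlockSequence.card_straddles_le_one [Fintype κ] (ha : IsBlockSequence a) (n : ℕ) :
    #{k | Straddles (a k) n} ≤ 1 :=
  card_le_one.2 fun _ hk _ hl =>
    ha.subsingleton_straddles n (by simpa using hk) (by simpa using hl)

end Supports

section PartitionSums

variable {X : Type*} [SeminormedAddCommGroup X] [Module ℝ X] (x : ℕ → X)

lemma SupportedInIoc.sum_Ioc_eq_finsum {a : ℕ → ℝ} {s t : ℕ} (h : SupportedInIoc a s t) :
    ∑ i ∈ Ioc s t, a i • x i = ∑ᶠ i, a i • x i :=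
  (finsum_eq_sum_of_support_subset _ fun i hi => by
    simpa using h.2 i (left_ne_zero_of_smul hi)).symm

variable {κ : Type*} [LinearOrder κ] [Fintype κ] {a : κ → ℕ → ℝ}

open scoped Classical in
theorem IsBlockSequence.norm_sum_Ioc_le (ha : IsBlockSequence a) (s t : ℕ) :
    ‖∑ i ∈ Ioc s t, (∑ k, a k) i • x i‖ ≤
      ∑ k with SupportedInIoc (a k) s t, ‖∑ᶠ i, a k i • x i‖ +
        √(2 * ∑ k, ‖∑ i ∈ Ioc s t, a k i • x i‖ ^ 2) := by
  set v : κ → X := fun k => ∑ i ∈ Ioc s t, a k i • x i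
  have hsum : ∑ i ∈ Ioc s t, (∑ k, a k) i • x i = ∑ k, v k := by
    simp only [v, Finset.sum_apply, sum_smul]
    exact sum_comm
  set straddling := ({k | ¬SupportedInIoc (a k) s t} : Finset κ).filter
    fun k => Straddles (a k) s ∨ Straddles (a k) t
  have hstraddling : ∑ k ∈ straddling, v k = ∑ k with ¬SupportedInIoc (a k) s t, v k :=
    sum_filter_of_ne fun k hk hv =>
      straddles_or_straddles_of_not_supportedInIoc hv (mem_filter.1 hk).2
  have hcard : (#straddling : ℝ) ≤ 2 := by
    have : #straddling ≤ 2 :=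
      calc #straddling ≤ #{k | Straddles (a k) s ∨ Straddles (a k) t} :=
            card_le_card fun k hk => by simp_all [straddling]
        _ ≤ #{k | Straddles (a k) s} + #{k | Straddles (a k) t} := by
            rw [filter_or]; exact card_union_le _ _
        _ ≤ 2 := by
            have := ha.card_straddles_le_one s
            have := ha.card_straddles_le_one t
            omega
    exact_mod_cast this
  rw [hsum, ← sum_filter_add_sum_filter_not univ (fun k => SupportedInIoc (a k) s t),
    ← hstraddling]
  refine (norm_add_le _ _).trans (add_le_add ?_ ?_)
  · exact (norm_sum_le _ _).trans_eq
      (sum_congr rfl fun k hk => by rw [← (mem_filter.1 hk).2.sum_Ioc_eq_finsum])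
  · refine (norm_sum_le_sqrt_card_mul_sum_sq _ _).trans (Real.sqrt_le_sqrt ?_)
    gcongr
    exact subset_univ _

open scoped Classical in
theorem IsBlockSequence.sqrt_sum_norm_sq_le (ha : IsBlockSequence a) {p : ℕ → ℕ}
    (hp : Monotone p) (m : ℕ) :
    √(∑ j ∈ range m, ‖∑ i ∈ Ioc (p j) (p (j + 1)), (∑ k, a k) i • x i‖ ^ 2) ≤
      ∑ k, ‖∑ᶠ i, a k i • x i‖ +
        √(2 * ∑ k, ∑ j ∈ range m, ‖∑ i ∈ Ioc (p j) (p (j + 1)), a k i • x i‖ ^ 2) := by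
  set inside : ℕ → Finset κ := fun j => {k | SupportedInIoc (a k) (p j) (p (j + 1))}
  set ε : κ → ℝ := fun k => ‖∑ᶠ i, a k i • x i‖
  set straddlingBound : ℕ → ℝ :=
    fun j => √(2 * ∑ k, ‖∑ i ∈ Ioc (p j) (p (j + 1)), a k i • x i‖ ^ 2)
  have hdisj : (range m : Set ℕ).PairwiseDisjoint inside := fun j _ j' _ hne =>
    disjoint_left.2 fun k hk hk' =>
      hne ((mem_filter.1 hk).2.eq_of_monotone hp (mem_filter.1 hk').2)
  have hstraddlingBound : ∑ j ∈ range m, straddlingBound j ^ 2 =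
      2 * ∑ k, ∑ j ∈ range m, ‖∑ i ∈ Ioc (p j) (p (j + 1)), a k i • x i‖ ^ 2 := by
    rw [sum_comm, mul_sum]
    exact sum_congr rfl fun j _ => Real.sq_sqrt (by positivity)
  calc _ ≤ √(∑ j ∈ range m, (∑ k ∈ inside j, ε k + straddlingBound j) ^ 2) := by
        gcongr with j
        exact ha.norm_sum_Ioc_le x _ _
    _ ≤ √(∑ j ∈ range m, (∑ k ∈ inside j, ε k) ^ 2) + √(∑ j ∈ range m, straddlingBound j ^ 2) :=
        Real.sqrt_sum_sq_add_le _ _ _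
    _ ≤ ∑ j ∈ range m, ∑ k ∈ inside j, ε k + √(∑ j ∈ range m, straddlingBound j ^ 2) := by
        gcongr
        exact Real.sqrt_sum_sq_le_sum fun j _ => sum_nonneg fun k _ => norm_nonneg _
    _ ≤ _ := by
        rw [hstraddlingBound, ← sum_biUnion hdisj]
        gcongr
        exact subset_univ _

end PartitionSums

lemma sum_norm_sq_le_lindENorm_sq {X : Type*} [NormedAddCommGroup X] [NormedSpace ℝ X]
    (x : ℕ → X) {a : ℕ → ℝ} (ha : BddAbove (ENormSet x a)) {p : ℕ → ℕ} (hp0 : p 0 = 0)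
    (hp : StrictMono p) (m : ℕ) :
    ∑ j ∈ range m, ‖∑ i ∈ Ioc (p j) (p (j + 1)), a i • x i‖ ^ 2 ≤ LindENorm x a ^ 2 :=
  (Real.sqrt_le_iff.1 (le_csSup ha ⟨m, p, hp0, hp, rfl⟩)).2

lemma isBlockSequence_of_support_subset_Ioo {N : ℕ} {a : Fin N → ℕ → ℝ} {r : Fin (N + 1) → ℕ}
    (hr : Monotone r)
    (hsupp : ∀ (k : Fin N) (i : ℕ), a k i ≠ 0 → r k.castSucc < i ∧ i < r k.succ) :
    IsBlockSequence a := fun k l hkl i j hi hj => by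
  have := hr (Fin.succ_le_castSucc_iff.2 hkl)
  have := (hsupp k i hi).2
  have := (hsupp l j hj).1
  omega

theorem enorm_skipped_blocks_general {X : Type*} [NormedAddCommGroup X] [NormedSpace ℝ X]
    (x : ℕ → X)
    (N : ℕ) (a : Fin N → ℕ → ℝ) (r : Fin (N + 1) → ℕ)
    (hrmono : StrictMono r)
    (hsupp : ∀ (k : Fin N) (i : ℕ), a k i ≠ 0 → r k.castSucc < i ∧ i < r k.succ)
    (haE : ∀ k, BddAbove (ENormSet x (a k)))
    (ε : Fin N → ℝ)
    (hε : ∀ k : Fin N, ε k = ‖∑ i ∈ Finset.Ioo (r k.castSucc) (r k.succ), a k i • x i‖) :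
    LindENorm x (∑ k, a k) ≤
      ∑ k, ε k + 2 * Real.sqrt (∑ k, LindENorm x (a k) ^ 2) := by
  have hε_eq : ∀ k, ε k = ‖∑ᶠ i, a k i • x i‖ := fun k => by
    rw [hε, finsum_eq_sum_of_support_subset (s := Ioo _ _) _ fun i hi => by
      simpa using hsupp k i (left_ne_zero_of_smul hi)]
  simp only [hε_eq]
  refine Real.sSup_le ?_ (by positivity)
  rintro _ ⟨m, p, hp0, hp, rfl⟩
  calc _ ≤ ∑ k, ‖∑ᶠ i, a k i • x i‖ +
        √(2 * ∑ k, ∑ j ∈ range m, ‖∑ i ∈ Ioc (p j) (p (j + 1)), a k i • x i‖ ^ 2) :=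
        (isBlockSequence_of_support_subset_Ioo hrmono.monotone hsupp).sqrt_sum_norm_sq_le x
          hp.monotone m
    _ ≤ ∑ k, ‖∑ᶠ i, a k i • x i‖ + √(2 * ∑ k, LindENorm x (a k) ^ 2) := by
        gcongr with k
        exact sum_norm_sq_le_lindENorm_sq x (haE k) hp0 hp m
    _ ≤ _ := by
        gcongr
        exact Real.sqrt_two_mul_le (sum_nonneg fun k _ => sq_nonneg _)

/-- If `a¹, …, aᴺ` are skipped blocks, i.e. `supp aᵏ ⊆ (r_{k-1}, r_k)` for some
`0 = r₀ < r₁ < ⋯ < r_N`, and `ε_k = ‖∑ᵢ aᵏᵢ xᵢ‖`, then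
`‖∑ₖ aᵏ‖_E ≤ ∑ₖ ε_k + 2 (∑ₖ ‖aᵏ‖_E²)^{1/2}`. -/
theorem enorm_skipped_blocks {X : Type*} [NormedAddCommGroup X] [NormedSpace ℝ X]
    [CompleteSpace X]
    (x : ℕ → X) (hx : ∀ i, ‖x i‖ = 1)
    (N : ℕ) (a : Fin N → ℕ → ℝ) (r : Fin (N + 1) → ℕ)
    (hr0 : r 0 = 0) (hrmono : StrictMono r)
    (hsupp : ∀ (k : Fin N) (i : ℕ), a k i ≠ 0 → r k.castSucc < i ∧ i < r k.succ)
    (haE : ∀ k, BddAbove (ENormSet x (a k)))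
    (ε : Fin N → ℝ)
    (hε : ∀ k : Fin N, ε k = ‖∑ i ∈ Finset.Ioo (r k.castSucc) (r k.succ), a k i • x i‖) :
    LindENorm x (∑ k, a k) ≤
      ∑ k, ε k + 2 * Real.sqrt (∑ k, LindENorm x (a k) ^ 2) :=
  enorm_skipped_blocks_general x N a r hrmono hsupp haE ε hε
end

section
/- If $\mathcal{F}$ and $\mathcal{G}$ are regular families of finite subsets of $\mathbb{N}$ (hereditary, spreading, and compact), $E < F$, $F \neq \emptyset$, and both $E$ and $E \cup F$ belong to $\mathcal{F}[\mathcal{G}]$, then either $E \in \mathcal{F}^{(1)}[\mathcal{G}]$ or $F \in \mathcal{G}$. -/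
/-- The indicator of a finite set of naturals, as a point of the Cantor space `ℕ → Bool`. -/
def finsetInd (E : Finset ℕ) : ℕ → Bool := fun n => decide (n ∈ E)

/-- A family of finite subsets of `ℕ`, viewed as a subset of the Cantor space. -/
def famTop (F : Set (Finset ℕ)) : Set (ℕ → Bool) := finsetInd '' F

/-- A family is hereditary if it is closed under subsets. -/
def Hereditary (F : Set (Finset ℕ)) : Prop := ∀ E ∈ F, ∀ G ⊆ E, G ∈ F

/-- `G` is a spread of `E` if they have the same cardinality and the `i`-th element of `G`
(in increasing order) is at least the `i`-th element of `E`. -/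
def IsSpreadOf (G E : Finset ℕ) : Prop :=
  ∃ h : G.card = E.card, ∀ i : Fin E.card,
    ((E.orderIsoOfFin rfl) i).1 ≤ ((G.orderIsoOfFin h) i).1

/-- A family is spreading if it contains all spreads of its members. -/
def Spreading (F : Set (Finset ℕ)) : Prop := ∀ E ∈ F, ∀ G, IsSpreadOf G E → G ∈ F

/-- A family is regular if it is hereditary, spreading, and compact in the Cantor space. -/
def RegularFam (F : Set (Finset ℕ)) : Prop :=
  Hereditary F ∧ Spreading F ∧ IsCompact (famTop F)

/-- `E < F` for finite sets: every element of `E` is less than every element of `F`. -/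
def FinsetLT (E F : Finset ℕ) : Prop := ∀ a ∈ E, ∀ b ∈ F, a < b

/-- The bracket operation
`F[G] = {∅} ∪ {E₁ ∪ ⋯ ∪ Eₙ : ∅ ≠ Eᵢ ∈ G, E₁ < ⋯ < Eₙ, (min Eᵢ)ᵢ ∈ F}`. -/
def bracketFam (F G : Set (Finset ℕ)) : Set (Finset ℕ) :=
  {∅} ∪ { E | ∃ (n : ℕ) (_ : 0 < n) (Es : Fin n → Finset ℕ)
      (hne : ∀ i, (Es i).Nonempty),
      (∀ i, Es i ∈ G) ∧ (∀ i j : Fin n, i < j → FinsetLT (Es i) (Es j)) ∧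
      (Finset.univ.image fun i => (Es i).min' (hne i)) ∈ F ∧
      E = Finset.univ.biUnion Es }

/-- The Cantor–Bendixson derived family: those `E` whose indicator is an accumulation point
of the family in the Cantor space. -/
def derivFam (F : Set (Finset ℕ)) : Set (Finset ℕ) :=
  { E | finsetInd E ∈ derivedSet (famTop F) }

/-! Write `E ∪ F'` as `E₁ ∪ ⋯ ∪ Eₙ` with blocks in `G` whose minima form a set in `F`.
Since `E < F'`, the blocks meeting `E` form an initial run `E₁, …, E_k`, all contained in `E`
except possibly `E_k`, and all with their minimum in `E`. If `k = n`, then `F'` lies in the last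
block, hence in `G`. Otherwise `E = E₁ ∪ ⋯ ∪ (E_k ∩ E)` with minima `M = {m₁, …, m_k}`, and
`M ∪ {m}` lies in `F` for every `m ≥ m_{k+1}` by spreading; these sets converge to `M` in the
Cantor space, so `M ∈ F⁽¹⁾`. -/

open Filter Topology Finset

lemma finsetInd_injective : Function.Injective finsetInd := fun A B h => by
  ext n
  simpa [finsetInd] using congrFun h n

lemma tendsto_finsetInd_insert_atTop (T : Finset ℕ) :
    Tendsto (fun m => finsetInd (insert m T)) atTop (𝓝 (finsetInd T)) := by
  rw [tendsto_pi_nhds]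
  intro k
  refine tendsto_const_nhds.congr' ?_
  filter_upwards [eventually_gt_atTop k] with m hm
  simp [finsetInd, hm.ne]

lemma isSpreadOf_image {f : ℕ → ℕ} (hf : StrictMono f) (E : Finset ℕ) (hle : ∀ x ∈ E, x ≤ f x) :
    IsSpreadOf (E.image f) E := by
  have hcard : (E.image f).card = E.card := card_image_of_injective E hf.injective
  have hemb : (E.image f).orderEmbOfFin hcard = f ∘ E.orderEmbOfFin rfl :=
    (orderEmbOfFin_unique hcard (fun i => mem_image_of_mem f (orderEmbOfFin_mem E rfl i))
      (hf.comp (E.orderEmbOfFin rfl).strictMono)).symm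
  refine ⟨hcard, fun i => ?_⟩
  simp only [coe_orderIsoOfFin_apply, hemb, Function.comp_apply]
  exact hle _ (orderEmbOfFin_mem E rfl i)

lemma Spreading.insert_mem_of_le {F : Set (Finset ℕ)} (hF : Spreading F) {T : Finset ℕ} {t m : ℕ}
    (hTt : ∀ s ∈ T, s < t) (htm : t ≤ m) (h : insert t T ∈ F) : insert m T ∈ F := by
  set f : ℕ → ℕ := fun x => if x < t then x else x + (m - t)
  have hf : StrictMono f := by
    intro a b hab
    simp only [f]
    split_ifs <;> omega
  have himage : (insert t T).image f = insert m T := by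
    have hT : T.image f = T :=
      (image_congr fun s hs => if_pos (hTt s hs)).trans (image_id' (s := T))
    rw [image_insert, hT]
    congr 1
    simp only [f, lt_irrefl, if_false]
    omega
  refine himage ▸ hF _ h _ (isSpreadOf_image hf _ fun x _ => ?_)
  simp only [f]
  split_ifs <;> omega

lemma mem_derivFam_of_insert_mem {F : Set (Finset ℕ)} (hF : Spreading F) {T : Finset ℕ} {t : ℕ}
    (hTt : ∀ s ∈ T, s < t) (h : insert t T ∈ F) : T ∈ derivFam F := by
  refine accPt_iff_frequently.2 <|
    (tendsto_finsetInd_insert_atTop T).frequently (Eventually.frequently ?_)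
  filter_upwards [eventually_ge_atTop t] with m hm
  refine ⟨finsetInd_injective.ne (insert_ne_self.2 fun hmT => ?_),
    ⟨_, hF.insert_mem_of_le hTt hm h, rfl⟩⟩
  exact (hTt m hmT).not_ge hm

lemma FinsetLT.subset_of_subset_union {A B E F' : Finset ℕ} (hAB : FinsetLT A B)
    (hEF : FinsetLT E F') (hA : A ⊆ E ∪ F') (hB : (B ∩ E).Nonempty) : A ⊆ E := by
  obtain ⟨y, hy⟩ := hB
  intro x hx
  refine (mem_union.1 (hA hx)).resolve_right fun hxF => ?_
  exact (hAB x hx y (mem_of_mem_inter_left hy)).not_gt (hEF y (mem_of_mem_inter_right hy) x hxF)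

lemma min'_mem_of_subset_union {A E F' : Finset ℕ} (hEF : FinsetLT E F') (hA : A ⊆ E ∪ F')
    (hAne : A.Nonempty) (hAE : (A ∩ E).Nonempty) : A.min' hAne ∈ E := by
  obtain ⟨y, hy⟩ := hAE
  refine (mem_union.1 (hA (min'_mem A hAne))).resolve_right fun hF => ?_
  exact (min'_le A y (mem_of_mem_inter_left hy)).not_gt (hEF y (mem_of_mem_inter_right hy) _ hF)

lemma min'_inter_eq_min' {α : Type*} [LinearOrder α] {s t : Finset α} (hs : s.Nonempty)
    (hst : (s ∩ t).Nonempty) (hmem : s.min' hs ∈ t) : (s ∩ t).min' hst = s.min' hs :=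
  le_antisymm (min'_le _ _ (mem_inter.2 ⟨min'_mem s hs, hmem⟩))
    (min'_subset hst inter_subset_left)

lemma subset_last_of_inter_nonempty {m : ℕ} {Es : Fin (m + 1) → Finset ℕ} {E F' : Finset ℕ}
    (hord : ∀ i j, i < j → FinsetLT (Es i) (Es j)) (hlt : FinsetLT E F')
    (hunion : E ∪ F' = univ.biUnion Es) (hlast : (Es (Fin.last m) ∩ E).Nonempty) :
    F' ⊆ Es (Fin.last m) := by
  intro y hy
  obtain ⟨i, -, hyi⟩ := mem_biUnion.1 (hunion ▸ mem_union_right E hy : y ∈ univ.biUnion Es)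
  obtain rfl | hi := (Fin.le_last i).eq_or_lt
  · exact hyi
  have hsub : Es i ⊆ E := (hord i _ hi).subset_of_subset_union hlt
    (hunion ▸ subset_biUnion_of_mem Es (mem_univ i)) hlast
  exact absurd (hlt y (hsub hyi) y hy) (lt_irrefl y)

lemma lt_of_mem_of_inter_eq_empty {n : ℕ} {Es : Fin n → Finset ℕ} {E F' : Finset ℕ}
    (hord : ∀ i j, i < j → FinsetLT (Es i) (Es j)) (hlt : FinsetLT E F')
    (hsub : ∀ i, Es i ⊆ E ∪ F') {i j : Fin n} (hne : (Es j).Nonempty) (hj : Es j ∩ E = ∅)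
    {x : ℕ} (hxE : x ∈ E) (hxi : x ∈ Es i) : i < j := by
  have hiE : (Es i ∩ E).Nonempty := ⟨x, mem_inter.2 ⟨hxi, hxE⟩⟩
  by_contra! hji
  obtain rfl | hji := hji.eq_or_lt
  · exact hiE.ne_empty hj
  · have hjE : Es j ⊆ E := (hord j i hji).subset_of_subset_union hlt (hsub j) hiE
    exact hne.ne_empty (by rwa [inter_eq_left.2 hjE] at hj)

lemma mem_bracketFam_derivFam_of_inter_eq_empty {F G : Set (Finset ℕ)} (hFh : Hereditary F)
    (hFs : Spreading F) (hG : Hereditary G) {n : ℕ} {Es : Fin n → Finset ℕ}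
    (hne : ∀ i, (Es i).Nonempty) (hEsG : ∀ i, Es i ∈ G)
    (hord : ∀ i j, i < j → FinsetLT (Es i) (Es j))
    (hmins : (univ.image fun i => (Es i).min' (hne i)) ∈ F) {E F' : Finset ℕ}
    (hlt : FinsetLT E F') (hunion : E ∪ F' = univ.biUnion Es) (hE : E.Nonempty) {j : Fin n}
    (hj : Es j ∩ E = ∅) (hmeet : ∀ i < j, (Es i ∩ E).Nonempty) :
    E ∈ bracketFam (derivFam F) G := by
  have hsub : ∀ i, Es i ⊆ E ∪ F' := fun i => hunion ▸ subset_biUnion_of_mem Es (mem_univ i)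
  have hcover : ∀ x ∈ E, ∃ i, x ∈ Es i := fun x hx => by
    simpa using (hunion ▸ mem_union_left F' hx : x ∈ univ.biUnion Es)
  have hj0 : 0 < (j : ℕ) := by
    obtain ⟨x, hx⟩ := hE
    obtain ⟨i, hi⟩ := hcover x hx
    exact (Nat.zero_le i).trans_lt (lt_of_mem_of_inter_eq_empty hord hlt hsub (hne j) hj hx hi)
  set ι : Fin j → Fin n := Fin.castLE j.isLt.le
  have hι : ∀ i, ι i < j := fun i => i.isLt
  refine Or.inr ⟨j, hj0, fun i => Es (ι i) ∩ E, fun i => hmeet _ (hι i),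
    fun i => hG _ (hEsG _) _ inter_subset_left, fun i i' h x hx y hy =>
      hord _ _ h x (mem_of_mem_inter_left hx) y (mem_of_mem_inter_left hy), ?_, ?_⟩
  · apply mem_derivFam_of_insert_mem hFs (t := (Es j).min' (hne j))
    · simp only [mem_image, mem_univ, true_and]
      rintro _ ⟨i, rfl⟩
      exact hord _ _ (hι i) _ (mem_of_mem_inter_left (min'_mem _ _)) _ (min'_mem _ _)
    · refine hFh _ hmins _ (insert_subset (mem_image_of_mem _ (mem_univ j)) ?_)
      simp only [subset_iff, mem_image, mem_univ, true_and]
      rintro _ ⟨i, rfl⟩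
      exact ⟨ι i, (min'_inter_eq_min' (hne _) _
        (min'_mem_of_subset_union hlt (hsub _) (hne _) (hmeet _ (hι i)))).symm⟩
  · ext x
    simp only [mem_biUnion, mem_univ, true_and, mem_inter]
    refine ⟨fun hx => ?_, fun ⟨_, _, hx⟩ => hx⟩
    obtain ⟨i, hi⟩ := hcover x hx
    exact ⟨⟨i, lt_of_mem_of_inter_eq_empty hord hlt hsub (hne j) hj hx hi⟩, hi, hx⟩

theorem bracket_mem_deriv_or_general {F G : Set (Finset ℕ)}
    (hF : RegularFam F) (hG : RegularFam G)
    (E F' : Finset ℕ) (hlt : FinsetLT E F')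
    (hEF : E ∪ F' ∈ bracketFam F G) :
    E ∈ bracketFam (derivFam F) G ∨ F' ∈ G := by
  obtain rfl | hE := E.eq_empty_or_nonempty
  · exact Or.inl (Or.inl rfl)
  obtain hEF | ⟨n, hn, Es, hne, hEsG, hord, hmins, hunion⟩ := hEF
  · exact absurd (Set.mem_singleton_iff.1 hEF) (hE.mono subset_union_left).ne_empty
  by_cases hdisj : ∃ j, Es j ∩ E = ∅
  · obtain ⟨j, hj⟩ := exists_minimal_of_wellFoundedLT _ hdisj
    exact Or.inl (mem_bracketFam_derivFam_of_inter_eq_empty hF.1 hF.2.1 hG.1 hne hEsG hord hmins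
      hlt hunion hE hj.1 fun i hi => nonempty_iff_ne_empty.2 fun h => hj.not_lt h hi)
  · obtain ⟨m, rfl⟩ := Nat.exists_eq_add_one_of_ne_zero hn.ne'
    exact Or.inr (hG.1 _ (hEsG _) _ (subset_last_of_inter_nonempty hord hlt hunion
      (nonempty_iff_ne_empty.2 fun h => hdisj ⟨_, h⟩)))

/-- If `F` and `G` are regular families, `E < F'`, `F'` nonempty, and both `E` and `E ∪ F'`
belong to `F[G]`, then `E ∈ F⁽¹⁾[G]` or `F' ∈ G`. -/
theorem bracket_mem_deriv_or {F G : Set (Finset ℕ)}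
    (hF : RegularFam F) (hG : RegularFam G)
    (E F' : Finset ℕ) (hlt : FinsetLT E F') (hne : F'.Nonempty)
    (hE : E ∈ bracketFam F G) (hEF : E ∪ F' ∈ bracketFam F G) :
    E ∈ bracketFam (derivFam F) G ∨ F' ∈ G :=
  bracket_mem_deriv_or_general hF hG E F' hlt hEF
end

section
/- Let $X$ be a Banach space with a shrinking Schauder basis $(x_i)_{i=1}^\infty$, and let $X^{\ell_2}$ be the completion of $c_{00}$ under the norm $\|\sum a_i e_i\| = \sup\{(\sum_{i} \|\sum_{j=k_{i-1}+1}^{k_i} a_j x_j\|_X^2)^{1/2} : 0 \leq k_0 < k_1 < \cdots\}$. If $x^*, y^*$ are elements of $(X^{\ell_2})^*$ that are finite linear combinations of the coordinate functionals $(e_i^*)$ with $\max \mathrm{supp}(x^*) < \min \mathrm{supp}(y^*)$, then $\|x^* + y^*\|^2 \leq \|x^*\|^2 + \|y^*\|^2$. -/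
/-- The set of values whose supremum defines the norm of `X^{ℓ₂}`: for an increasing
sequence `0 ≤ k₀ < k₁ < ⋯`, the value `(∑ᵢ ‖∑_{j=kᵢ+1}^{k_{i+1}} a_j x_j‖²)^{1/2}`. -/
noncomputable def XL2Set {X : Type*} [NormedAddCommGroup X] [NormedSpace ℝ X]
    (x : ℕ → X) (a : ℕ → ℝ) : Set ℝ :=
  { r | ∃ k : ℕ → ℕ, StrictMono k ∧
      r = Real.sqrt (∑' j : ℕ, ‖∑ i ∈ Finset.Ioc (k j) (k (j + 1)), a i • x i‖ ^ 2) }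

/-- The norm of `X^{ℓ₂}` on (coefficient sequences of) `c₀₀`. -/
noncomputable def XL2Norm {X : Type*} [NormedAddCommGroup X] [NormedSpace ℝ X]
    (x : ℕ → X) (a : ℕ → ℝ) : ℝ :=
  sSup (XL2Set x a)

/-- `(xᵢ)` is a Schauder basis of `X`: every vector has a unique representation as a norm
convergent series `∑ aᵢ xᵢ` (convergence of partial sums). -/
def IsSchauderBasis {X : Type*} [NormedAddCommGroup X] [NormedSpace ℝ X]
    (x : ℕ → X) : Prop :=
  ∀ v : X, ∃! a : ℕ → ℝ,
    Filter.Tendsto (fun n => ∑ i ∈ Finset.range n, a i • x i) Filter.atTop (nhds v)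

/-- The basis `(xᵢ)` is shrinking: for every functional `f`, the norm of the restriction of
`f` to the closed span of the tail vectors tends to `0`. -/
def IsShrinkingBasis {X : Type*} [NormedAddCommGroup X] [NormedSpace ℝ X]
    (x : ℕ → X) : Prop :=
  ∀ f : StrongDual ℝ X,
    Filter.Tendsto
      (fun n => sSup { r | ∃ v : X,
        v ∈ Submodule.span ℝ (x '' Set.Ici n) ∧ ‖v‖ ≤ 1 ∧ r = |f v| })
      Filter.atTop (nhds 0)

/-- The dual norm, on `(X^{ℓ₂})*`, of a finite linear combination `∑ bᵢ eᵢ*` of the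
coordinate functionals: the supremum of its values on the unit ball of `c₀₀ ⊆ X^{ℓ₂}`
(which is norm-dense in the unit ball of `X^{ℓ₂}`). -/
noncomputable def XL2DualNorm {X : Type*} [NormedAddCommGroup X] [NormedSpace ℝ X]
    (x : ℕ → X) (b : ℕ → ℝ) : ℝ :=
  sSup { r | ∃ a : ℕ → ℝ, (Function.support a).Finite ∧ XL2Norm x a ≤ 1 ∧
    r = |∑' i : ℕ, b i * a i| }

/-!
Let `n` separate the two supports and split a test vector `a` of `c₀₀` as `a₁ + a₂`, with `a₁`
supported in `[0, n]` and `a₂` in `(n, ∞)`. Any admissible partition for `a₁` and any one for `a₂`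
can be spliced, by inserting the cut point `n`, into one admissible partition for `a` whose blocks
carry at least both sums of squares, so `‖a₁‖² + ‖a₂‖² ≤ ‖a‖²`. Hence
`|(x* + y*)(a)| ≤ ‖x*‖ ‖a₁‖ + ‖y*‖ ‖a₂‖ ≤ (‖x*‖² + ‖y*‖²)^{1/2} ‖a‖` by Cauchy–Schwarz in the plane.
The dual-norm part only uses positive homogeneity of the norm and this splitting inequality.
-/

open Finset

lemma sSup_sq_add_le_of_forall {S : Set ℝ} {c M : ℝ} (hne : S.Nonempty) (hS : ∀ r ∈ S, 0 ≤ r)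
    (h : ∀ r ∈ S, r ^ 2 + c ≤ M) : sSup S ^ 2 + c ≤ M := by
  obtain ⟨r₀, hr₀⟩ := hne
  have hMc : 0 ≤ M - c := by nlinarith [h r₀ hr₀]
  have hle : sSup S ≤ √(M - c) :=
    Real.sSup_le (fun r hr => (le_abs_self r).trans (Real.abs_le_sqrt (by linarith [h r hr])))
      (Real.sqrt_nonneg _)
  have := pow_le_pow_left₀ (Real.sSup_nonneg hS) hle 2
  rw [Real.sq_sqrt hMc] at this
  linarith

-- `XL2DualNorm x b` unfolds to `sSup (dualNormSet (XL2Norm x) b)`.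
def dualNormSet (N : (ℕ → ℝ) → ℝ) (b : ℕ → ℝ) : Set ℝ :=
  {r | ∃ a : ℕ → ℝ, (Function.support a).Finite ∧ N a ≤ 1 ∧ r = |∑' i, b i * a i|}

section DualNorm

variable {N : (ℕ → ℝ) → ℝ} {b c : ℕ → ℝ} {s : Set ℕ}

lemma tsum_mul_smul (b a : ℕ → ℝ) (t : ℝ) : ∑' i, b i * (t • a) i = t * ∑' i, b i * a i := by
  simp only [Pi.smul_apply, smul_eq_mul, mul_left_comm, tsum_mul_left]

lemma sSup_dualNormSet_nonneg : 0 ≤ sSup (dualNormSet N b) :=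
  Real.sSup_nonneg fun _ ⟨_, _, _, hr⟩ => hr ▸ abs_nonneg _

lemma abs_tsum_mul_le_sSup_dualNormSet_mul (hN0 : ∀ a, 0 ≤ N a)
    (hsmul : ∀ (t : ℝ) a, (Function.support a).Finite → N (t • a) ≤ |t| * N a)
    (hbdd : BddAbove (dualNormSet N b)) {a : ℕ → ℝ} (ha : (Function.support a).Finite) :
    |∑' i, b i * a i| ≤ sSup (dualNormSet N b) * N a := by
  set p := ∑' i, b i * a i
  have hmem : ∀ t : ℝ, N (t • a) ≤ 1 → |t * p| ∈ dualNormSet N b := fun t ht =>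
    ⟨t • a, ha.subset (Function.support_const_smul_subset t a), ht, by rw [tsum_mul_smul]⟩
  rcases (hN0 a).eq_or_lt with h0 | hpos
  · -- every multiple of `a` lies in the unit ball, so the pairing is bounded on a line
    obtain ⟨M, hM⟩ := hbdd
    have hp : p = 0 := by
      by_contra hp
      have := hM (hmem ((|M| + 1) / p) ((hsmul _ a ha).trans (by rw [← h0, mul_zero]; simp)))
      rw [div_mul_cancel₀ _ hp, abs_of_pos (by positivity)] at this
      linarith [le_abs_self M]
    rw [hp, abs_zero, ← h0, mul_zero]
  · have := le_csSup hbdd (hmem (N a)⁻¹ ((hsmul _ a ha).trans_eq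
      (by rw [abs_of_pos (inv_pos.2 hpos), inv_mul_cancel₀ hpos.ne'])))
    rwa [abs_mul, abs_of_pos (inv_pos.2 hpos), inv_mul_le_iff₀ hpos, mul_comm] at this

lemma mul_indicator_of_support_subset (hb : Function.support b ⊆ s) (a : ℕ → ℝ) (i : ℕ) :
    b i * s.indicator a i = b i * a i := by
  by_cases hi : i ∈ s
  · rw [Set.indicator_of_mem hi]
  · rw [Function.notMem_support.1 fun h => hi (hb h), zero_mul, zero_mul]

lemma mul_indicator_of_support_subset_compl (hc : Function.support c ⊆ sᶜ) (a : ℕ → ℝ) (i : ℕ) :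
    c i * s.indicator a i = 0 := by
  by_cases hi : i ∈ s
  · rw [Function.notMem_support.1 fun h => hc h hi, zero_mul]
  · rw [Set.indicator_of_notMem hi, mul_zero]

lemma dualNormSet_subset_add (hmono : ∀ a, (Function.support a).Finite → N (s.indicator a) ≤ N a)
    (hb : Function.support b ⊆ s) (hc : Function.support c ⊆ sᶜ) :
    dualNormSet N b ⊆ dualNormSet N (b + c) := by
  rintro _ ⟨a, ha, hNa, rfl⟩
  refine ⟨s.indicator a, ha.subset (by simp), (hmono a ha).trans hNa, ?_⟩
  simp only [Pi.add_apply, add_mul, mul_indicator_of_support_subset hb,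
    mul_indicator_of_support_subset_compl hc, add_zero]

lemma tsum_add_mul_eq (hb : Function.support b ⊆ s) (hc : Function.support c ⊆ sᶜ)
    {a : ℕ → ℝ} (ha : (Function.support a).Finite) :
    ∑' i, (b + c) i * a i = ∑' i, b i * s.indicator a i + ∑' i, c i * sᶜ.indicator a i := by
  have hsum : ∀ d : ℕ → ℝ, Summable fun i => d i * a i := fun d =>
    summable_of_hasFiniteSupport (ha.subset (Function.support_mul_subset_right _ _))
  simp only [mul_indicator_of_support_subset hb, mul_indicator_of_support_subset hc, Pi.add_apply,
    add_mul, (hsum b).tsum_add (hsum c)]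

theorem sSup_dualNormSet_add_sq_le (hN0 : ∀ a, 0 ≤ N a)
    (hsmul : ∀ (t : ℝ) a, (Function.support a).Finite → N (t • a) ≤ |t| * N a)
    (hsplit : ∀ a, (Function.support a).Finite →
      N (s.indicator a) ^ 2 + N (sᶜ.indicator a) ^ 2 ≤ N a ^ 2)
    (hb : Function.support b ⊆ s) (hc : Function.support c ⊆ sᶜ) :
    sSup (dualNormSet N (b + c)) ^ 2 ≤ sSup (dualNormSet N b) ^ 2 + sSup (dualNormSet N c) ^ 2 := by
  by_cases hbdd : BddAbove (dualNormSet N (b + c))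
  swap
  · rw [Real.sSup_of_not_bddAbove hbdd, zero_pow two_ne_zero]
    positivity
  have hle₁ : ∀ a, (Function.support a).Finite → N (s.indicator a) ≤ N a := fun a ha =>
    (pow_le_pow_iff_left₀ (hN0 _) (hN0 a) two_ne_zero).1 (by nlinarith [hsplit a ha])
  have hle₂ : ∀ a, (Function.support a).Finite → N (sᶜ.indicator a) ≤ N a := fun a ha =>
    (pow_le_pow_iff_left₀ (hN0 _) (hN0 a) two_ne_zero).1 (by nlinarith [hsplit a ha])
  have hbdd_b : BddAbove (dualNormSet N b) := hbdd.mono (dualNormSet_subset_add hle₁ hb hc)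
  have hbdd_c : BddAbove (dualNormSet N c) := by
    refine hbdd.mono ((dualNormSet_subset_add hle₂ hc (by rwa [compl_compl])).trans ?_)
    rw [add_comm]
  set β := sSup (dualNormSet N b)
  set γ := sSup (dualNormSet N c)
  have hβ : 0 ≤ β := sSup_dualNormSet_nonneg
  have hγ : 0 ≤ γ := sSup_dualNormSet_nonneg
  suffices h : sSup (dualNormSet N (b + c)) ≤ √(β ^ 2 + γ ^ 2) from
    (Real.le_sqrt sSup_dualNormSet_nonneg (by positivity)).1 h
  refine Real.sSup_le ?_ (Real.sqrt_nonneg _)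
  rintro _ ⟨a, ha, hNa, rfl⟩
  have hsq : N (s.indicator a) ^ 2 + N (sᶜ.indicator a) ^ 2 ≤ 1 :=
    (hsplit a ha).trans (pow_le_one₀ (hN0 a) hNa)
  have ht₁ := hN0 (s.indicator a)
  have ht₂ := hN0 (sᶜ.indicator a)
  calc |∑' i, (b + c) i * a i|
      ≤ β * N (s.indicator a) + γ * N (sᶜ.indicator a) := by
        rw [tsum_add_mul_eq hb hc ha]
        exact (abs_add_le _ _).trans (add_le_add
          (abs_tsum_mul_le_sSup_dualNormSet_mul hN0 hsmul hbdd_b (ha.subset (by simp)))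
          (abs_tsum_mul_le_sSup_dualNormSet_mul hN0 hsmul hbdd_c (ha.subset (by simp))))
    _ ≤ √(β ^ 2 + γ ^ 2) := by
        -- Cauchy–Schwarz in the plane
        refine (Real.le_sqrt (by positivity) (by positivity)).2 ?_
        nlinarith [sq_nonneg (β * N (sᶜ.indicator a) - γ * N (s.indicator a)),
          mul_le_mul_of_nonneg_left hsq (add_nonneg (sq_nonneg β) (sq_nonneg γ))]

end DualNorm

section XL2Norm

variable {X : Type*} [NormedAddCommGroup X] [NormedSpace ℝ X] (x : ℕ → X) {a : ℕ → ℝ}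

noncomputable def blockNormSq (a : ℕ → ℝ) (k : ℕ → ℕ) (j : ℕ) : ℝ :=
  ‖∑ i ∈ Ioc (k j) (k (j + 1)), a i • x i‖ ^ 2

lemma mem_XL2Set_iff {r : ℝ} :
    r ∈ XL2Set x a ↔ ∃ k : ℕ → ℕ, StrictMono k ∧ r = √(∑' j, blockNormSq x a k j) :=
  Iff.rfl

lemma blockNormSq_nonneg (a : ℕ → ℝ) (k : ℕ → ℕ) (j : ℕ) : 0 ≤ blockNormSq x a k j :=
  sq_nonneg _

lemma blockNormSq_eq_zero_of_le {k : ℕ → ℕ} {j : ℕ} (h : k (j + 1) ≤ k j) :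
    blockNormSq x a k j = 0 := by
  simp [blockNormSq, Finset.Ioc_eq_empty_of_le h]

lemma blockNormSq_eq_zero_of_upperBound {P : ℕ} (hP : P ∈ upperBounds (Function.support a))
    {k : ℕ → ℕ} {j : ℕ} (hj : P ≤ k j) : blockNormSq x a k j = 0 := by
  have : ∑ i ∈ Ioc (k j) (k (j + 1)), a i • x i = 0 :=
    Finset.sum_eq_zero fun i hi => by
      rw [Function.notMem_support.1 fun h => (mem_Ioc.1 hi).1.not_ge ((hP h).trans hj), zero_smul]
  simp [blockNormSq, this]

lemma summable_blockNormSq (ha : (Function.support a).Finite) {k : ℕ → ℕ}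
    (hk : Filter.Tendsto k Filter.atTop Filter.atTop) : Summable (blockNormSq x a k) := by
  obtain ⟨P, hP⟩ := ha.bddAbove
  obtain ⟨J, hJ⟩ := Filter.eventually_atTop.1 (hk.eventually_ge_atTop P)
  refine summable_of_ne_finset_zero (s := range J) fun j hj => ?_
  exact blockNormSq_eq_zero_of_upperBound x hP (hJ j (by simpa using hj))

lemma XL2Set_nonempty (a : ℕ → ℝ) : (XL2Set x a).Nonempty :=
  ⟨_, id, strictMono_id, rfl⟩

lemma XL2Set_nonneg {r : ℝ} (hr : r ∈ XL2Set x a) : 0 ≤ r := by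
  obtain ⟨k, -, rfl⟩ := hr
  exact Real.sqrt_nonneg _

lemma XL2Set_bddAbove (ha : (Function.support a).Finite) : BddAbove (XL2Set x a) := by
  obtain ⟨P, hP⟩ := ha.bddAbove
  set C := ∑' i, ‖a i • x i‖
  have hC : Summable fun i => ‖a i • x i‖ :=
    summable_of_hasFiniteSupport (ha.subset fun i hi => by
      simp_all [Function.mem_support])
  refine ⟨√(P * C ^ 2), ?_⟩
  intro r hr
  obtain ⟨k, hk, rfl⟩ := (mem_XL2Set_iff x).1 hr
  refine Real.sqrt_le_sqrt ?_
  have hblock : ∀ j, blockNormSq x a k j ≤ C ^ 2 := fun j =>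
    pow_le_pow_left₀ (norm_nonneg _) ((norm_sum_le _ _).trans
      (hC.sum_le_tsum _ fun i _ => norm_nonneg _)) 2
  calc ∑' j, blockNormSq x a k j = ∑ j ∈ range P, blockNormSq x a k j :=
        tsum_eq_sum fun j hj => blockNormSq_eq_zero_of_upperBound x hP
          ((not_lt.1 (by simpa using hj)).trans (hk.id_le j))
    _ ≤ ∑ j ∈ range P, C ^ 2 := Finset.sum_le_sum fun j _ => hblock j
    _ = P * C ^ 2 := by simp

lemma le_XL2Norm (ha : (Function.support a).Finite) {k : ℕ → ℕ} (hk : StrictMono k) :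
    √(∑' j, blockNormSq x a k j) ≤ XL2Norm x a :=
  le_csSup (XL2Set_bddAbove x ha) ⟨k, hk, rfl⟩

lemma XL2Norm_nonneg (a : ℕ → ℝ) : 0 ≤ XL2Norm x a :=
  Real.sSup_nonneg fun _ => XL2Set_nonneg x

lemma XL2Norm_zero : XL2Norm x (fun _ => 0) = 0 :=
  le_antisymm (Real.sSup_le (fun r hr => by obtain ⟨k, -, rfl⟩ := hr; simp) le_rfl)
    (XL2Norm_nonneg x _)

lemma XL2Norm_smul_le (t : ℝ) (a : ℕ → ℝ) (ha : (Function.support a).Finite) :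
    XL2Norm x (t • a) ≤ |t| * XL2Norm x a := by
  refine Real.sSup_le (fun r hr => ?_) (mul_nonneg (abs_nonneg t) (XL2Norm_nonneg x a))
  obtain ⟨k, hk, rfl⟩ := (mem_XL2Set_iff x).1 hr
  have hblock : ∀ j, blockNormSq x (t • a) k j = t ^ 2 * blockNormSq x a k j := fun j => by
    simp only [blockNormSq, Pi.smul_apply, smul_eq_mul, mul_smul, ← Finset.smul_sum, norm_smul,
      mul_pow, Real.norm_eq_abs, sq_abs]
  rw [tsum_congr hblock, tsum_mul_left, Real.sqrt_mul (sq_nonneg t), Real.sqrt_sq_eq_abs]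
  exact mul_le_mul_of_nonneg_left (le_XL2Norm x ha hk) (abs_nonneg t)

lemma blockNormSq_indicator_Iic (n : ℕ) (k : ℕ → ℕ) :
    blockNormSq x ((Set.Iic n).indicator a) k = blockNormSq x a (fun j => min (k j) n) := by
  ext j
  simp only [blockNormSq, Set.indicator_apply, ite_smul, zero_smul, Set.mem_Iic]
  rw [← Finset.sum_filter]
  congr 3
  ext i
  simp only [mem_filter, mem_Ioc]
  omega

lemma blockNormSq_indicator_Iic_compl (n : ℕ) (k : ℕ → ℕ) :
    blockNormSq x ((Set.Iic n)ᶜ.indicator a) k = blockNormSq x a (fun j => max (k j) n) := by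
  ext j
  simp only [blockNormSq, Set.indicator_apply, ite_smul, zero_smul, Set.mem_compl_iff,
    Set.mem_Iic]
  rw [← Finset.sum_filter]
  congr 3
  ext i
  simp only [mem_filter, mem_Ioc]
  omega

lemma tsum_blockNormSq_of_eq_const {k : ℕ → ℕ} {j₀ n : ℕ} (hk : ∀ j, j₀ ≤ j → k j = n) :
    ∑' j, blockNormSq x a k j = ∑ j ∈ range j₀, blockNormSq x a k j :=
  tsum_eq_sum fun j hj => by
    have hj : j₀ ≤ j := by simpa using hj
    exact blockNormSq_eq_zero_of_le x (by rw [hk j hj, hk (j + 1) (by omega)])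

lemma sum_range_blockNormSq_le {k : ℕ → ℕ} {m n : ℕ} (hk : ∀ j < m, k j = n) :
    ∑ j ∈ range m, blockNormSq x a k j ≤ ‖∑ i ∈ Ioc n (k m), a i • x i‖ ^ 2 := by
  cases m with
  | zero => simp only [range_zero, sum_empty]; positivity
  | succ m =>
    rw [sum_range_succ, sum_eq_zero fun j hj => blockNormSq_eq_zero_of_le x ?_, zero_add,
      blockNormSq, hk m (lt_add_one m)]
    have hj := mem_range.1 hj
    rw [hk j (by omega), hk (j + 1) (by omega)]

lemma tsum_blockNormSq_indicator_Iic_eq {n j₀ : ℕ} {k κ : ℕ → ℕ} (hk : Monotone k)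
    (hj₀ : n ≤ k j₀) (hκ : ∀ j ≤ j₀, κ j = min (k j) n) :
    ∑' j, blockNormSq x ((Set.Iic n).indicator a) k j = ∑ j ∈ range j₀, blockNormSq x a κ j := by
  rw [blockNormSq_indicator_Iic, tsum_blockNormSq_of_eq_const x (j₀ := j₀) (n := n)
    fun j hj => min_eq_right (hj₀.trans (hk hj))]
  refine sum_congr rfl fun j hj => ?_
  have hj : j < j₀ := mem_range.1 hj
  simp only [blockNormSq, hκ j hj.le, hκ (j + 1) hj]

lemma strictMono_splice {k₁ k₂ : ℕ → ℕ} (hk₁ : StrictMono k₁) (hk₂ : StrictMono k₂)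
    {n j₀ j₁ : ℕ} (h₀ : ∀ j < j₀, k₁ j < n) (h₁ : n < k₂ j₁) :
    StrictMono fun j => if j ≤ j₀ then min (k₁ j) n else k₂ (j₁ + (j - (j₀ + 1))) := by
  refine strictMono_nat_of_lt_succ fun j => ?_
  rcases lt_trichotomy j j₀ with h | rfl | h
  · rw [if_pos h.le, if_pos (Nat.succ_le_of_lt h)]
    exact (min_le_left _ _).trans_lt (lt_min (hk₁ (lt_add_one j)) (h₀ j h))
  · rw [if_pos le_rfl, if_neg (by omega), Nat.sub_self, add_zero]
    exact (min_le_right _ _).trans_lt h₁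
  · rw [if_neg (by omega), if_neg (by omega)]
    exact hk₂ (by omega)

lemma exists_strictMono_tsum_blockNormSq_add_le (ha : (Function.support a).Finite) (n : ℕ)
    {k₁ k₂ : ℕ → ℕ} (hk₁ : StrictMono k₁) (hk₂ : StrictMono k₂) :
    ∃ κ : ℕ → ℕ, StrictMono κ ∧ ∑' j, blockNormSq x ((Set.Iic n).indicator a) k₁ j +
      ∑' j, blockNormSq x ((Set.Iic n)ᶜ.indicator a) k₂ j ≤ ∑' j, blockNormSq x a κ j := by
  have hex₀ : ∃ j, n ≤ k₁ j := ⟨n, hk₁.id_le n⟩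
  have hex₁ : ∃ j, n < k₂ j := ⟨n + 1, (lt_add_one n).trans_le (hk₂.id_le _)⟩
  set j₀ := Nat.find hex₀
  set j₁ := Nat.find hex₁
  have hj₀ : n ≤ k₁ j₀ := Nat.find_spec hex₀
  have hj₁ : n < k₂ j₁ := Nat.find_spec hex₁
  have h₀ : ∀ j < j₀, k₁ j < n := fun j hj => not_le.1 (Nat.find_min hex₀ hj)
  have h₁ : ∀ j < j₁, k₂ j ≤ n := fun j hj => not_lt.1 (Nat.find_min hex₁ hj)
  -- the cut points of `k₁` below `n`, then `n`, then those of `k₂` above `n`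
  set κ := fun j => if j ≤ j₀ then min (k₁ j) n else k₂ (j₁ + (j - (j₀ + 1)))
  have hκ : StrictMono κ := strictMono_splice hk₁ hk₂ h₀ hj₁
  refine ⟨κ, hκ, ?_⟩
  have hleft := tsum_blockNormSq_indicator_Iic_eq x (a := a) (κ := κ) hk₁.monotone hj₀
    fun j hj => if_pos hj
  have hright : ∑' j, blockNormSq x ((Set.Iic n)ᶜ.indicator a) k₂ j
      ≤ blockNormSq x a κ j₀ + ∑' t, blockNormSq x a κ (t + (j₀ + 1)) := by
    have hsum := summable_blockNormSq x ha
      (Filter.tendsto_atTop_mono (fun j => le_max_left (k₂ j) n) hk₂.tendsto_atTop)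
    rw [blockNormSq_indicator_Iic_compl, ← hsum.sum_add_tsum_nat_add j₁]
    refine add_le_add ((sum_range_blockNormSq_le x fun j hj => max_eq_right (h₁ j hj)).trans
      (le_of_eq ?_)) (le_of_eq (tsum_congr fun t => ?_))
    · simp only [blockNormSq, κ, if_pos le_rfl, if_neg (show ¬ j₀ + 1 ≤ j₀ by omega), Nat.sub_self,
        add_zero, min_eq_right hj₀, max_eq_left hj₁.le]
    · have hmono : ∀ j, j₁ ≤ j → n ≤ k₂ j := fun j hj => hj₁.le.trans (hk₂.monotone hj)
      simp only [blockNormSq, κ, if_neg (show ¬ t + (j₀ + 1) ≤ j₀ by omega),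
        if_neg (show ¬ t + (j₀ + 1) + 1 ≤ j₀ by omega),
        show j₁ + (t + (j₀ + 1) - (j₀ + 1)) = t + j₁ by omega,
        show j₁ + (t + (j₀ + 1) + 1 - (j₀ + 1)) = t + j₁ + 1 by omega,
        max_eq_left (hmono (t + j₁) (by omega)), max_eq_left (hmono (t + j₁ + 1) (by omega))]
  rw [← (summable_blockNormSq x ha hκ.tendsto_atTop).sum_add_tsum_nat_add (j₀ + 1),
    sum_range_succ, ← hleft]
  linarith

theorem XL2Norm_indicator_Iic_sq_add_le (ha : (Function.support a).Finite) (n : ℕ) :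
    XL2Norm x ((Set.Iic n).indicator a) ^ 2 + XL2Norm x ((Set.Iic n)ᶜ.indicator a) ^ 2
      ≤ XL2Norm x a ^ 2 := by
  refine sSup_sq_add_le_of_forall (XL2Set_nonempty x _) (fun _ => XL2Set_nonneg x)
    fun r₁ hr₁ => ?_
  rw [add_comm]
  refine sSup_sq_add_le_of_forall (XL2Set_nonempty x _) (fun _ => XL2Set_nonneg x)
    fun r₂ hr₂ => ?_
  obtain ⟨k₁, hk₁, rfl⟩ := (mem_XL2Set_iff x).1 hr₁
  obtain ⟨k₂, hk₂, rfl⟩ := (mem_XL2Set_iff x).1 hr₂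
  obtain ⟨κ, hκ, hle⟩ := exists_strictMono_tsum_blockNormSq_add_le x ha n hk₁ hk₂
  have hnonneg : ∀ (a : ℕ → ℝ) (k : ℕ → ℕ), 0 ≤ ∑' j, blockNormSq x a k j :=
    fun a k => tsum_nonneg (blockNormSq_nonneg x a k)
  rw [Real.sq_sqrt (hnonneg _ _), Real.sq_sqrt (hnonneg _ _)]
  calc _ ≤ ∑' j, blockNormSq x a κ j := by linarith
    _ = √(∑' j, blockNormSq x a κ j) ^ 2 := (Real.sq_sqrt (hnonneg _ _)).symm
    _ ≤ XL2Norm x a ^ 2 := pow_le_pow_left₀ (Real.sqrt_nonneg _) (le_XL2Norm x ha hκ) 2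

theorem XL2Norm_indicator_sq_add_le {s : Set ℕ} (hs : IsLowerSet s)
    (ha : (Function.support a).Finite) :
    XL2Norm x (s.indicator a) ^ 2 + XL2Norm x (sᶜ.indicator a) ^ 2 ≤ XL2Norm x a ^ 2 := by
  obtain rfl | ⟨_ | n, rfl⟩ := hs.eq_univ_or_Iio
  · simp [XL2Norm_zero]
  · simp [XL2Norm_zero]
  · rw [Set.Iio_add_one_eq_Iic]
    exact XL2Norm_indicator_Iic_sq_add_le x ha n

end XL2Norm

theorem xl2_dual_succ_sq_general {X : Type*} [NormedAddCommGroup X] [NormedSpace ℝ X]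
    (x : ℕ → X)
    (b c : ℕ → ℝ)
    (hlt : ∀ i j : ℕ, b i ≠ 0 → c j ≠ 0 → i < j) :
    XL2DualNorm x (b + c) ^ 2 ≤ XL2DualNorm x b ^ 2 + XL2DualNorm x c ^ 2 := by
  set s : Set ℕ := {i | ∀ j, c j ≠ 0 → i < j}
  have hs : IsLowerSet s := fun i i' hi' hi j hj => hi'.trans_lt (hi j hj)
  exact sSup_dualNormSet_add_sq_le (XL2Norm_nonneg x) (XL2Norm_smul_le x)
    (fun a ha => XL2Norm_indicator_sq_add_le x hs ha) (fun i hi j hj => hlt i j hi hj)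
    (fun j hj hjs => lt_irrefl j (hjs j hj))

/-- If `x*`, `y*` are finite linear combinations of the coordinate functionals `(eᵢ*)` on
`X^{ℓ₂}` with `max supp x* < min supp y*`, then `‖x* + y*‖² ≤ ‖x*‖² + ‖y*‖²`. -/
theorem xl2_dual_succ_sq {X : Type*} [NormedAddCommGroup X] [NormedSpace ℝ X]
    [CompleteSpace X] (x : ℕ → X)
    (hbasis : IsSchauderBasis x) (hshrink : IsShrinkingBasis x)
    (b c : ℕ → ℝ) (hb : (Function.support b).Finite) (hc : (Function.support c).Finite)
    (hlt : ∀ i j : ℕ, b i ≠ 0 → c j ≠ 0 → i < j) :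
    XL2DualNorm x (b + c) ^ 2 ≤ XL2DualNorm x b ^ 2 + XL2DualNorm x c ^ 2 :=
  xl2_dual_succ_sq_general x b c hlt
end

section
/- Let $X$ be a Banach space with a normalized Schauder basis $(x_i)$ with bimonotonicity constant $C$, and let $X^{\ell_2}$ be as above. Then for every $x = \sum_{i=1}^\infty a_i e_i \in X^{\ell_2}$ and every $\varepsilon > 0$, there exist $n \in \mathbb{N}$, integers $0 = k_0 < k_1 < \cdots < k_n$, and functionals $y_1^*, \ldots, y_n^* \in X^*$ with $\mathrm{supp}(y_i^*) \subset (k_{i-1}, k_i]$ and $\sum_{i=1}^n \|y_i^*\|_{X^*}^2 \leq 1$, such that $\sum_{i=1}^n y_i^*(\sum_{j=k_{i-1}+1}^{k_i} a_j x_j) \geq (\|x\|_{X^{\ell_2}} - \varepsilon)/C$. In particular, the set $K$ of functionals of the form $\sum_i I^* y_i^*$ with $(y_i^*)$ successively supported blocks in $B_{\ell_2(X^*)}$ is $1/C$-norming for $X^{\ell_2}$. -/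
open NormedSpace

/-!
Pick blocks `(kᵢ, kᵢ₊₁]` whose block vectors `bᵢ` satisfy `(∑ ‖bᵢ‖²)^{1/2} > ‖x‖ - ε`. A
functional norming `bᵢ`, composed with the projection onto the `i`-th block, has norm at most
`C` by bimonotonicity; it is a priori only defined on the span of the basis, and Hahn–Banach
extends it to `gᵢ ∈ X*`. The weights `‖bᵢ‖ / (C (∑ ‖bⱼ‖²)^{1/2})` of the equality case of
Cauchy–Schwarz then turn the `gᵢ` into the required `yᵢ*`.
-/

open Finset Filter

theorem exists_sum_sq_le_one_sum_mul_eq_sqrt {ι : Type*} (s : Finset ι) (β : ι → ℝ) :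
    ∃ d : ι → ℝ, ∑ i ∈ s, d i ^ 2 ≤ 1 ∧ ∑ i ∈ s, d i * β i = √(∑ i ∈ s, β i ^ 2) := by
  -- If `β = 0` on `s`, the junk value `β i / √0 = 0` still satisfies both claims.
  refine ⟨fun i => β i / √(∑ i ∈ s, β i ^ 2), ?_, ?_⟩
  · simp_rw [div_pow, ← sum_div, Real.sq_sqrt (sum_nonneg fun i _ => sq_nonneg (β i))]
    exact div_self_le_one _
  · simp_rw [div_mul_eq_mul_div, ← sq, ← sum_div, Real.div_sqrt]

theorem StrictMono.update_zero {k : ℕ → ℕ} (hk : StrictMono k) :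
    StrictMono (Function.update k 0 0) := by
  refine strictMono_nat_of_lt_succ fun i => ?_
  rcases i with _ | i
  · simpa using (Nat.zero_le _).trans_lt (hk zero_lt_one)
  · simpa using hk (Nat.lt_succ_self (i + 1))

section

variable {X : Type*} [NormedAddCommGroup X] [NormedSpace ℝ X]

theorem IsSchauderBasis.linearIndependent {x : ℕ → X} (hx : IsSchauderBasis x) :
    LinearIndependent ℝ x := by
  classical
  rw [linearIndependent_iff']
  intro s c hsum i hi
  obtain ⟨_, -, huniq⟩ := hx 0
  have hc : Tendsto (fun n => ∑ j ∈ range n, (if j ∈ s then c j else 0) • x j) atTop (nhds 0) := by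
    refine tendsto_const_nhds.congr' ?_
    filter_upwards [eventually_ge_atTop (s.sup id + 1)] with n hn
    have hs : s ⊆ range n := fun j hj =>
      mem_range.mpr (lt_of_le_of_lt (le_sup (f := id) hj) (by omega))
    rw [← hsum, ← sum_subset hs (fun j _ hj => by simp [hj])]
    exact sum_congr rfl fun j hj => by simp [hj]
  have h0 : Tendsto (fun n => ∑ j ∈ range n, (0 : ℝ) • x j) atTop (nhds 0) := by
    simp
  simpa [hi] using congrFun ((huniq _ hc).trans (huniq _ h0).symm) i

theorem LinearIndependent.exists_dual_eq_comp_filter {ι : Type*} {x : ι → X}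
    (hx : LinearIndependent ℝ x) (P : ι → Prop) [DecidablePred P] {C : ℝ} (hC : 0 ≤ C)
    (hP : ∀ (s : Finset ι) (a : ι → ℝ), ‖∑ i ∈ s.filter P, a i • x i‖ ≤ C * ‖∑ i ∈ s, a i • x i‖)
    (f : StrongDual ℝ X) :
    ∃ g : StrongDual ℝ X, ‖g‖ ≤ ‖f‖ * C ∧
      ∀ (s : Finset ι) (a : ι → ℝ), g (∑ i ∈ s, a i • x i) = f (∑ i ∈ s.filter P, a i • x i) := by
  set b := Module.Basis.span hx
  let Q := b.constr ℝ fun i => if P i then x i else 0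
  have hb : ∀ (s : Finset ι) (a : ι → ℝ), ((∑ i ∈ s, a i • b i : _) : X) = ∑ i ∈ s, a i • x i :=
    fun s a => by simp [b, Module.Basis.span_apply]
  have hQ : ∀ (s : Finset ι) (a : ι → ℝ), Q (∑ i ∈ s, a i • b i) = ∑ i ∈ s.filter P, a i • x i :=
    fun s a => by simp [Q, map_sum, Module.Basis.constr_basis, sum_filter, smul_ite]
  have hbound : ∀ w, ‖Q w‖ ≤ C * ‖w‖ := by
    intro w
    obtain ⟨s, a, rfl⟩ : ∃ (s : Finset ι) (a : ι → ℝ), w = ∑ i ∈ s, a i • b i :=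
      ⟨_, _, by simpa [Finsupp.linearCombination_apply, Finsupp.sum] using
        (b.linearCombination_repr w).symm⟩
    rw [hQ, ← Submodule.norm_coe, hb]
    exact hP s a
  obtain ⟨g, hgQ, hg⟩ := exists_extension_norm_eq _ (f.comp (Q.mkContinuous C hbound))
  refine ⟨g, ?_, fun s a => ?_⟩
  · rw [hg]
    exact (f.opNorm_comp_le _).trans
      (mul_le_mul_of_nonneg_left (Q.mkContinuous_norm_le hC hbound) (norm_nonneg f))
  · have h := hgQ (∑ i ∈ s, a i • b i)
    rwa [ContinuousLinearMap.comp_apply, LinearMap.mkContinuous_apply, hQ, hb] at h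

theorem exists_dual_supported_norming_block {x : ℕ → X} (hx : LinearIndependent ℝ x) {C : ℝ}
    (hC : 0 ≤ C)
    (hbimono : ∀ (s : Finset ℕ) (a : ℕ → ℝ) (p q : ℕ),
      ‖∑ i ∈ s.filter (fun i => p < i ∧ i ≤ q), a i • x i‖ ≤ C * ‖∑ i ∈ s, a i • x i‖)
    (a : ℕ → ℝ) (p q : ℕ) :
    ∃ g : StrongDual ℝ X, ‖g‖ ≤ C ∧ (∀ j, ¬(p < j ∧ j ≤ q) → g (x j) = 0) ∧
      g (∑ j ∈ Ioc p q, a j • x j) = ‖∑ j ∈ Ioc p q, a j • x j‖ := by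
  obtain ⟨f, hf, hfv⟩ := exists_dual_vector'' ℝ (∑ j ∈ Ioc p q, a j • x j)
  obtain ⟨g, hg, hgf⟩ := hx.exists_dual_eq_comp_filter _ hC (fun s a => hbimono s a p q) f
  refine ⟨g, hg.trans (mul_le_of_le_one_left hC hf), fun j hj => ?_, ?_⟩
  · simpa [filter_singleton, if_neg hj] using hgf {j} 1
  · rw [hgf, filter_true_of_mem fun j hj => mem_Ioc.mp hj, hfv]
    rfl

theorem apply_sum_Ioc_eq_of_le {x : ℕ → X} {g : StrongDual ℝ X} {p q : ℕ}
    (hg : ∀ j, ¬(p < j ∧ j ≤ q) → g (x j) = 0) (a : ℕ → ℝ) {p' : ℕ} (hp' : p' ≤ p) (hpq : p ≤ q) :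
    g (∑ j ∈ Ioc p' q, a j • x j) = g (∑ j ∈ Ioc p q, a j • x j) := by
  rw [← sum_Ioc_consecutive _ hp' hpq, map_add, add_eq_right, map_sum]
  exact sum_eq_zero fun j hj => by simp [hg j (by simp at hj; omega)]

theorem exists_lt_sqrt_sum_range_of_lt_XL2Norm {x : ℕ → X} {a : ℕ → ℝ} {t : ℝ}
    (ht : t < XL2Norm x a) :
    ∃ k : ℕ → ℕ, StrictMono k ∧
      ∃ m, t < √(∑ j ∈ range m, ‖∑ i ∈ Ioc (k j) (k (j + 1)), a i • x i‖ ^ 2) := by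
  obtain ⟨_, ⟨k, hk, rfl⟩, htr⟩ := exists_lt_of_lt_csSup
    (s := XL2Set x a) ⟨_, id, strictMono_id, rfl⟩ ht
  refine ⟨k, hk, ?_⟩
  by_cases hsum : Summable fun j => ‖∑ i ∈ Ioc (k j) (k (j + 1)), a i • x i‖ ^ 2
  · exact (((Real.continuous_sqrt.tendsto _).comp hsum.hasSum.tendsto_sum_nat).eventually
      (eventually_gt_nhds htr)).exists
  · rw [tsum_eq_zero_of_not_summable hsum] at htr
    exact ⟨0, by simpa using htr⟩

end

theorem xl2_norming_functionals_general {X : Type*} [NormedAddCommGroup X] [NormedSpace ℝ X]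
    (x : ℕ → X) (hbasis : IsSchauderBasis x)
    (C : ℝ) (hC : 1 ≤ C)
    (hbimono : ∀ (s : Finset ℕ) (a : ℕ → ℝ) (p q : ℕ),
      ‖∑ i ∈ s.filter (fun i => p < i ∧ i ≤ q), a i • x i‖ ≤ C * ‖∑ i ∈ s, a i • x i‖)
    (a : ℕ → ℝ) (ε : ℝ) (hε : 0 < ε) :
    ∃ (n : ℕ) (k : ℕ → ℕ), k 0 = 0 ∧ StrictMono k ∧
      ∃ y : ℕ → StrongDual ℝ X,
        (∀ i < n, ∀ j : ℕ, ¬(k i < j ∧ j ≤ k (i + 1)) → y i (x j) = 0) ∧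
        (∑ i ∈ Finset.range n, ‖y i‖ ^ 2) ≤ 1 ∧
        (XL2Norm x a - ε) / C ≤
          ∑ i ∈ Finset.range n, y i (∑ j ∈ Finset.Ioc (k i) (k (i + 1)), a j • x j) := by
  have hC0 : 0 < C := by linarith
  obtain ⟨k, hk, m, hm⟩ := exists_lt_sqrt_sum_range_of_lt_XL2Norm (sub_lt_self (XL2Norm x a) hε)
  choose g hgC hgx hgb using fun i => exists_dual_supported_norming_block
    hbasis.linearIndependent hC0.le hbimono a (k i) (k (i + 1))
  obtain ⟨d, hd, hdb⟩ := exists_sum_sq_le_one_sum_mul_eq_sqrt (range m)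
    fun i => ‖∑ j ∈ Ioc (k i) (k (i + 1)), a j • x j‖
  -- The first block is widened to start at `0`; `g 0` does not see the added coordinates.
  have hk' : ∀ i, Function.update k 0 0 i ≤ k i ∧ Function.update k 0 0 (i + 1) = k (i + 1) :=
    fun i => ⟨by rcases i with _ | i <;> simp, by simp⟩
  refine ⟨m, Function.update k 0 0, by simp, hk.update_zero, fun i => (d i / C) • g i,
    fun i _ j hj => ?_, ?_, ?_⟩
  · rw [smul_apply,
      hgx i j fun h => hj ⟨(hk' i).1.trans_lt h.1, (hk' i).2 ▸ h.2⟩, smul_zero]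
  · refine le_trans (sum_le_sum fun i _ => ?_) hd
    have hyi : ‖(d i / C) • g i‖ ≤ |d i| := by
      rw [norm_smul, Real.norm_eq_abs, abs_div, abs_of_pos hC0, div_mul_eq_mul_div,
        div_le_iff₀ hC0]
      exact mul_le_mul_of_nonneg_left (hgC i) (abs_nonneg _)
    simpa only [sq_abs] using pow_le_pow_left₀ (norm_nonneg _) hyi 2
  · have hblock : ∀ i ∈ range m, ((d i / C) • g i)
        (∑ j ∈ Ioc (Function.update k 0 0 i) (Function.update k 0 0 (i + 1)), a j • x j) =
        d i * ‖∑ j ∈ Ioc (k i) (k (i + 1)), a j • x j‖ / C := fun i _ => by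
      rw [smul_apply, (hk' i).2,
        apply_sum_Ioc_eq_of_le (hgx i) a (hk' i).1 (hk i.lt_succ_self).le, hgb, smul_eq_mul,
        div_mul_eq_mul_div]
    rw [sum_congr rfl hblock, ← sum_div, hdb]
    exact div_le_div_of_nonneg_right hm.le hC0.le

/-- The Hahn–Banach step in the proof that the set `K` of images of successively supported
blocks of functionals is `1/C`-norming for `X^{ℓ₂}`: for any `x = ∑ aᵢ eᵢ ∈ X^{ℓ₂}` and
`ε > 0`, there are `0 = k₀ < k₁ < ⋯ < kₙ` and functionals `yᵢ*` supported in
`(k_{i-1}, k_i]` with `∑ ‖yᵢ*‖² ≤ 1` and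
`∑ᵢ yᵢ*(∑_{j=k_{i-1}+1}^{k_i} a_j x_j) ≥ (‖x‖_{X^{ℓ₂}} - ε)/C`. -/
theorem xl2_norming_functionals {X : Type*} [NormedAddCommGroup X] [NormedSpace ℝ X]
    [CompleteSpace X] (x : ℕ → X)
    (hnorm : ∀ i, ‖x i‖ = 1) (hbasis : IsSchauderBasis x)
    (C : ℝ) (hC : 1 ≤ C)
    (hbimono : ∀ (s : Finset ℕ) (a : ℕ → ℝ) (p q : ℕ),
      ‖∑ i ∈ s.filter (fun i => p < i ∧ i ≤ q), a i • x i‖ ≤ C * ‖∑ i ∈ s, a i • x i‖)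
    (a : ℕ → ℝ) (ha : BddAbove (XL2Set x a)) (ε : ℝ) (hε : 0 < ε) :
    ∃ (n : ℕ) (k : ℕ → ℕ), k 0 = 0 ∧ StrictMono k ∧
      ∃ y : ℕ → StrongDual ℝ X,
        (∀ i < n, ∀ j : ℕ, ¬(k i < j ∧ j ≤ k (i + 1)) → y i (x j) = 0) ∧
        (∑ i ∈ Finset.range n, ‖y i‖ ^ 2) ≤ 1 ∧
        (XL2Norm x a - ε) / C ≤
          ∑ i ∈ Finset.range n, y i (∑ j ∈ Finset.Ioc (k i) (k (i + 1)), a j • x j) :=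
  xl2_norming_functionals_general x hbasis C hC hbimono a ε hε
end

section
/- Let $K = \bigcup_{n=0}^\infty K_n$ be a union of weak$^*$-compact subsets of a dual ball, with $0$ in the weak$^*$-closure of the union appropriately; then for any $\varepsilon > 0$ and any ordinal $\eta$, the $\eta$-th $\varepsilon$-Szlenk derivation satisfies $s_\varepsilon^\eta(K) \subset \{0\} \cup \bigcup_{n=0}^\infty s_\varepsilon^\eta(K_n)$, provided each $K_n$ has the property that points of $K_n$ other than $0$ are weak$^*$-isolated from $\bigcup_{m \neq n} K_m$ (as in the case $K_n = \{2^{-n}\sum_{i \in E} x_i^* : E \in \mathcal{F}_n\}$ for regular families $\mathcal{F}_n$). Consequently $Sz(K, \varepsilon) \leq (\sup_n Sz(K_n, \varepsilon)) + 1$. -/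
open NormedSpace

/-- One step of the `ε`-Szlenk derivation of a set `K ⊆ X*`: the points of `K` all of whose
weak* neighborhoods meet `K` in a set of norm-diameter at least `ε`. -/
noncomputable def szDeriv {X : Type*} [NormedAddCommGroup X] [NormedSpace ℝ X]
    (ε : ℝ) (K : Set (StrongDual ℝ X)) : Set (StrongDual ℝ X) :=
  { f | f ∈ K ∧ ∀ U : Set (WeakDual ℝ X), IsOpen U → StrongDual.toWeakDual f ∈ U →
      ε ≤ Metric.diam { g | g ∈ K ∧ StrongDual.toWeakDual g ∈ U } }

/-- The transfinite iteration `s_ε^o(K)` of the `ε`-Szlenk derivation. -/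
noncomputable def szIter {X : Type*} [NormedAddCommGroup X] [NormedSpace ℝ X]
    (ε : ℝ) (K : Set (StrongDual ℝ X)) (o : Ordinal) : Set (StrongDual ℝ X) :=
  Ordinal.limitRecOn o K (fun _ S => szDeriv ε S)
    (fun o _ ih => ⋂ b : { b : Ordinal // b < o }, ih b.1 b.2)

/-!
Away from `0`, the pieces `Kᵢ` are weak*-separated from one another, so near a nonzero point of `Kᵢ`
the union `⋃ Kⱼ` coincides with `Kᵢ`. Szlenk derivation is local, so by transfinite induction a
nonzero point of `s_ε^η(⋃ Kⱼ)` lies in `s_ε^η(Kᵢ)`. Once every `s_ε^o(Kᵢ)` is empty, `s_ε^o(⋃ Kⱼ)`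
is at most `{0}`, whose derived set is empty.
-/

open Bornology

section Szlenk

variable {X : Type*} [NormedAddCommGroup X] [NormedSpace ℝ X] {ε : ℝ}

theorem szDeriv_subset (ε : ℝ) (A : Set (StrongDual ℝ X)) : szDeriv ε A ⊆ A :=
  fun _ hf => hf.1

theorem szDeriv_eq_empty_of_subsingleton (hε : 0 < ε) {A : Set (StrongDual ℝ X)}
    (hA : A.Subsingleton) : szDeriv ε A = ∅ := by
  refine Set.eq_empty_of_forall_notMem fun g ⟨_, hg⟩ => ?_
  have hdiam := hg Set.univ isOpen_univ (Set.mem_univ _)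
  rw [Metric.diam_subsingleton (hA.anti fun _ hh => hh.1)] at hdiam
  linarith

theorem mem_szDeriv_of_locally_subset {A B : Set (StrongDual ℝ X)} {f : StrongDual ℝ X}
    (hB : IsBounded B) (hfB : f ∈ B) (hf : f ∈ szDeriv ε A) {U : Set (WeakDual ℝ X)}
    (hU : IsOpen U) (hfU : StrongDual.toWeakDual f ∈ U)
    (hAU : ∀ g ∈ A, StrongDual.toWeakDual g ∈ U → g ∈ B) : f ∈ szDeriv ε B := by
  refine ⟨hfB, fun V hV hfV => ?_⟩
  calc ε ≤ Metric.diam {g | g ∈ A ∧ StrongDual.toWeakDual g ∈ U ∩ V} :=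
        hf.2 _ (hU.inter hV) ⟨hfU, hfV⟩
    _ ≤ Metric.diam {g | g ∈ B ∧ StrongDual.toWeakDual g ∈ V} :=
        Metric.diam_mono (fun g ⟨hgA, hgU, hgV⟩ => ⟨hAU g hgA hgU, hgV⟩)
          (hB.subset fun _ hg => hg.1)

theorem szIter_zero (ε : ℝ) (A : Set (StrongDual ℝ X)) : szIter ε A 0 = A :=
  Ordinal.limitRecOn_zero _ _ _

theorem szIter_add_one (ε : ℝ) (A : Set (StrongDual ℝ X)) (o : Ordinal) :
    szIter ε A (o + 1) = szDeriv ε (szIter ε A o) :=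
  Ordinal.limitRecOn_add_one _ _ _ _

theorem szIter_limit (ε : ℝ) (A : Set (StrongDual ℝ X)) {o : Ordinal} (ho : Order.IsSuccLimit o) :
    szIter ε A o = ⋂ b : {b : Ordinal // b < o}, szIter ε A b.1 :=
  Ordinal.limitRecOn_limit _ _ _ _ ho

theorem szIter_antitone (ε : ℝ) (A : Set (StrongDual ℝ X)) : Antitone (szIter ε A) := by
  intro a b hab
  induction b using Ordinal.limitRecOn with
  | zero => rw [nonpos_iff_eq_zero.1 hab]
  | add_one o ih =>
    rcases hab.eq_or_lt with rfl | hlt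
    · rfl
    · rw [szIter_add_one]
      exact (szDeriv_subset _ _).trans (ih (Order.lt_add_one_iff.1 hlt))
  | limit o ho _ =>
    rcases hab.eq_or_lt with rfl | hlt
    · rfl
    · rw [szIter_limit _ _ ho]
      exact Set.iInter_subset_of_subset ⟨a, hlt⟩ subset_rfl

theorem szIter_subset (ε : ℝ) (A : Set (StrongDual ℝ X)) (o : Ordinal) : szIter ε A o ⊆ A :=
  (szIter_antitone ε A (zero_le (a := o))).trans (szIter_zero ε A).subset

section iUnion

variable {ι : Type*} {K : ι → Set (StrongDual ℝ X)}

def WeakStarIsolatedOffZero (K : ι → Set (StrongDual ℝ X)) : Prop :=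
  ∀ i, ∀ f ∈ K i, f ≠ 0 → ∃ U : Set (WeakDual ℝ X),
    IsOpen U ∧ StrongDual.toWeakDual f ∈ U ∧ ∀ j, j ≠ i → ∀ g ∈ K j, StrongDual.toWeakDual g ∉ U

theorem mem_szIter_of_mem_szIter_iUnion (hbdd : ∀ i, IsBounded (K i))
    (hiso : WeakStarIsolatedOffZero K)
    (η : Ordinal) {i : ι} {f : StrongDual ℝ X} (hfK : f ∈ K i) (hf0 : f ≠ 0)
    (hf : f ∈ szIter ε (⋃ j, K j) η) : f ∈ szIter ε (K i) η := by
  induction η using Ordinal.limitRecOn generalizing f with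
  | zero => rwa [szIter_zero]
  | add_one o ih =>
    rw [szIter_add_one] at hf ⊢
    obtain ⟨U, hU, hfU, hUsep⟩ := hiso i f hfK hf0
    -- `U` is punctured at `0`, the one point that may lie in several `K j`.
    refine mem_szDeriv_of_locally_subset ((hbdd i).subset (szIter_subset _ _ _))
      (ih hfK hf0 hf.1) hf (hU.inter isClosed_singleton.isOpen_compl)
      ⟨hfU, fun h => hf0 (StrongDual.toWeakDual.injective (h.trans (map_zero _).symm))⟩ ?_
    rintro g hg ⟨hgU, hg0⟩
    obtain ⟨j, hgK⟩ := Set.mem_iUnion.1 (szIter_subset _ _ _ hg)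
    obtain rfl : j = i := by_contra fun hji => hUsep j hji g hgK hgU
    exact ih hgK (fun h => hg0 (by rw [h, map_zero]; rfl)) hg
  | limit o ho ih =>
    rw [szIter_limit _ _ ho] at hf ⊢
    exact Set.mem_iInter.2 fun b => ih b.1 b.2 hfK hf0 (Set.mem_iInter.1 hf b)

theorem szIter_iUnion_subset (hbdd : ∀ i, IsBounded (K i))
    (hiso : WeakStarIsolatedOffZero K)
    (η : Ordinal) : szIter ε (⋃ i, K i) η ⊆ {0} ∪ ⋃ i, szIter ε (K i) η := by
  intro f hf
  by_cases hf0 : f = 0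
  · exact Or.inl hf0
  obtain ⟨i, hfK⟩ := Set.mem_iUnion.1 (szIter_subset _ _ _ hf)
  exact Or.inr (Set.mem_iUnion.2 ⟨i, mem_szIter_of_mem_szIter_iUnion hbdd hiso η hfK hf0 hf⟩)

end iUnion

end Szlenk

theorem szlenk_union_general {X : Type*} [NormedAddCommGroup X] [NormedSpace ℝ X]
    (K : ℕ → Set (StrongDual ℝ X))
    (hball : ∀ n, K n ⊆ Metric.closedBall 0 1)
    (hiso : ∀ n, ∀ f ∈ K n, f ≠ 0 → ∃ U : Set (WeakDual ℝ X),
      IsOpen U ∧ StrongDual.toWeakDual f ∈ U ∧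
        ∀ m : ℕ, m ≠ n → ∀ g ∈ K m, StrongDual.toWeakDual g ∉ U) :
    (∀ ε > (0 : ℝ), ∀ η : Ordinal,
        szIter ε (⋃ n, K n) η ⊆ {0} ∪ ⋃ n, szIter ε (K n) η) ∧
    ∀ ε > (0 : ℝ), ∀ o : Ordinal,
      (∀ n, ∃ η ≤ o, szIter ε (K n) η = ∅) →
        ∃ η ≤ o + 1, szIter ε (⋃ n, K n) η = ∅ := by
  have hbdd : ∀ n, IsBounded (K n) := fun n => Metric.isBounded_closedBall.subset (hball n)
  refine ⟨fun ε _ η => szIter_iUnion_subset hbdd hiso η, fun ε hε o hK => ⟨o + 1, le_rfl, ?_⟩⟩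
  have hKo : ∀ n, szIter ε (K n) o = ∅ := fun n => by
    obtain ⟨η, hηo, hη⟩ := hK n
    exact Set.subset_empty_iff.1 (hη ▸ szIter_antitone ε (K n) hηo)
  have hzero : szIter ε (⋃ n, K n) o ⊆ {0} := fun f hf => by
    simpa [hKo] using szIter_iUnion_subset hbdd hiso o hf
  rw [szIter_add_one]
  exact szDeriv_eq_empty_of_subsingleton hε (Set.subsingleton_singleton.anti hzero)

/-- Let `K = ⋃ₙ Kₙ` with each `Kₙ` weak*-compact in the dual ball, and suppose every nonzero
point of `Kₙ` is weak*-isolated from `⋃_{m ≠ n} Kₘ`. Then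
`s_ε^η(K) ⊆ {0} ∪ ⋃ₙ s_ε^η(Kₙ)` for every `ε > 0` and ordinal `η`; consequently
`Sz(K, ε) ≤ (supₙ Sz(Kₙ, ε)) + 1` (any ordinal bounding all the `Sz(Kₙ, ε)`, plus one,
bounds `Sz(K, ε)`). -/
theorem szlenk_union {X : Type*} [NormedAddCommGroup X] [NormedSpace ℝ X] [CompleteSpace X]
    (K : ℕ → Set (StrongDual ℝ X))
    (hcpt : ∀ n, IsCompact (StrongDual.toWeakDual '' K n))
    (hball : ∀ n, K n ⊆ Metric.closedBall 0 1)
    (hiso : ∀ n, ∀ f ∈ K n, f ≠ 0 → ∃ U : Set (WeakDual ℝ X),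
      IsOpen U ∧ StrongDual.toWeakDual f ∈ U ∧
        ∀ m : ℕ, m ≠ n → ∀ g ∈ K m, StrongDual.toWeakDual g ∉ U) :
    (∀ ε > (0 : ℝ), ∀ η : Ordinal,
        szIter ε (⋃ n, K n) η ⊆ {0} ∪ ⋃ n, szIter ε (K n) η) ∧
    ∀ ε > (0 : ℝ), ∀ o : Ordinal,
      (∀ n, ∃ η ≤ o, szIter ε (K n) η = ∅) →
        ∃ η ≤ o + 1, szIter ε (⋃ n, K n) η = ∅ :=
  szlenk_union_general K hball hiso
end
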